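/- arXiv:2505.20699 — 7 statements merged into one kernel-verified Lean document; each statement's English description precedes it below -/
import Mathlib

section
/- Let n and k be integers with n ≥ k ≥ 2. Let S be a family of k-element subsets of {1, …, n}, and let T be the family of all (k+1)-element subsets of {1, …, n} that contain at least one member of S. Then (k+1)·C(n, k−1)·|T| ≤ ((k+1)·(n−k) + k)·C(n, k−1)·|S| − k²·|S|²; equivalently, |T| ≤ (n−k)·|S| − k²·|S|²/((k+1)·C(n, k−1)) + k·|S|/(k+1). -/
open Finset

private lemma aux_mul (x : ℕ) : x * x - x = x * (x - 1) := by
  cases x with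
  | zero => rfl
  | succ e => simp [Nat.mul_succ, Nat.succ_sub_one]

/-- Double counting: summing fiber sizes one way equals the other way. -/
private lemma dc_aux {α β : Type*} (A : Finset α) (B : Finset β)
    (p : α → β → Prop) [∀ a b, Decidable (p a b)] :
    ∑ a ∈ A, (B.filter (fun b => p a b)).card
      = ∑ b ∈ B, (A.filter (fun a => p a b)).card := by
  simp only [Finset.card_filter]
  exact Finset.sum_comm

/-- Let `n ≥ k ≥ 2`, let `S` be a family of `k`-element subsets of an `n`-element
set, and let `T` be the family of all `(k+1)`-element subsets containing at least one member of
`S`.  Then `(k+1)·C(n,k−1)·|T| ≤ ((k+1)·(n−k) + k)·C(n,k−1)·|S| − k²·|S|²`. -/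
theorem statement0 (n k : ℕ) (hk : 2 ≤ k) (hkn : k ≤ n)
    (S : Finset (Finset (Fin n))) (hS : ∀ s ∈ S, s.card = k)
    (T : Finset (Finset (Fin n)))
    (hT : ∀ t : Finset (Fin n), t ∈ T ↔ t.card = k + 1 ∧ ∃ s ∈ S, s ⊆ t) :
    ((k : ℤ) + 1) * (n.choose (k - 1) : ℤ) * (T.card : ℤ) ≤
      (((k : ℤ) + 1) * ((n : ℤ) - (k : ℤ)) + (k : ℤ)) * (n.choose (k - 1) : ℤ) * (S.card : ℤ) -
        (k : ℤ) ^ 2 * (S.card : ℤ) ^ 2 := by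
  classical
  set C := n.choose (k - 1) with hC
  set R : Finset (Finset (Fin n)) := Finset.univ.powersetCard (k - 1) with hR
  set d : Finset (Fin n) → ℕ := fun t => (S.filter (fun s => s ⊆ t)).card with hd
  set m : Finset (Fin n) → ℕ := fun r => (S.filter (fun s => r ⊆ s)).card with hm
  have hRcard : R.card = C := by
    simp [hR, hC]
  -- For s ∈ S, the (k+1)-sets containing s are exactly the members of T containing s
  have hTfix : ∀ s ∈ S, T.filter (fun t => s ⊆ t)
      = (Finset.univ.powersetCard (k + 1)).filter (fun t => s ⊆ t) := by
    intro s hs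
    ext t
    simp only [mem_filter, hT, Finset.mem_powersetCard_univ]
    constructor
    · rintro ⟨⟨h1, _⟩, h2⟩; exact ⟨h1, h2⟩
    · rintro ⟨h1, h2⟩; exact ⟨⟨h1, s, hs, h2⟩, h2⟩
  -- each s ∈ S has exactly n - k supersets of size k+1
  have hsup : ∀ s ∈ S,
      ((Finset.univ.powersetCard (k + 1)).filter (fun t => s ⊆ t)).card = n - k := by
    intro s hs
    have hcompl : (sᶜ).card = n - k := by
      simp [Finset.card_compl, hS s hs]
    rw [← hcompl]
    refine Eq.symm (Finset.card_bij (fun x _ => insert x s) ?_ ?_ ?_)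
    · intro x hx
      have hxs : x ∉ s := by simpa using hx
      simp only [mem_filter, Finset.mem_powersetCard_univ]
      exact ⟨by rw [Finset.card_insert_of_notMem hxs, hS s hs], Finset.subset_insert x s⟩
    · intro x hx y hy hxy
      have hxs : x ∉ s := by simpa using hx
      have hxy' : insert x s = insert y s := hxy
      have hmem : x ∈ insert y s := hxy' ▸ Finset.mem_insert_self x s
      rcases Finset.mem_insert.mp hmem with h | h
      · exact h
      · exact absurd h hxs
    · intro t ht
      simp only [mem_filter, Finset.mem_powersetCard_univ] at ht
      obtain ⟨htc, hst⟩ := ht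
      have hsd : (t \ s).card = 1 := by
        rw [Finset.card_sdiff_of_subset hst, htc, hS s hs]; omega
      obtain ⟨x, hx⟩ := Finset.card_eq_one.mp hsd
      have hxt : x ∈ t \ s := hx ▸ Finset.mem_singleton_self x
      obtain ⟨hx1, hx2⟩ := Finset.mem_sdiff.mp hxt
      refine ⟨x, by simpa using hx2, ?_⟩
      refine Finset.eq_of_subset_of_card_le (Finset.insert_subset hx1 hst) ?_
      rw [htc, Finset.card_insert_of_notMem hx2, hS s hs]
  -- sum of degrees over T
  have hA : ∑ t ∈ T, d t = (n - k) * S.card := by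
    calc ∑ t ∈ T, (S.filter (fun s => s ⊆ t)).card
        = ∑ s ∈ S, (T.filter (fun t => s ⊆ t)).card := dc_aux T S (fun t s => s ⊆ t)
      _ = ∑ _s ∈ S, (n - k) := Finset.sum_congr rfl (fun s hs => by rw [hTfix s hs, hsup s hs])
      _ = (n - k) * S.card := by rw [Finset.sum_const, smul_eq_mul, mul_comm]
  -- sum of m over R
  have hB : ∑ r ∈ R, m r = k * S.card := by
    calc ∑ r ∈ R, (S.filter (fun s => r ⊆ s)).card
        = ∑ s ∈ S, (R.filter (fun r => r ⊆ s)).card := dc_aux R S (fun r s => r ⊆ s)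
      _ = ∑ _s ∈ S, k := by
          refine Finset.sum_congr rfl (fun s hs => ?_)
          have hfr : R.filter (fun r => r ⊆ s) = s.powersetCard (k - 1) := by
            ext r
            simp only [hR, mem_filter, Finset.mem_powersetCard, Finset.subset_univ, true_and]
            tauto
          rw [hfr, Finset.card_powersetCard, hS s hs,
            ← Nat.choose_symm (by omega : k - 1 ≤ k),
            show k - (k - 1) = 1 by omega, Nat.choose_one_right]
      _ = k * S.card := by rw [Finset.sum_const, smul_eq_mul, mul_comm]
  -- the pair set
  set Q : Finset (Finset (Fin n) × Finset (Fin n)) :=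
    (S ×ˢ S).filter (fun p => p.1 ≠ p.2 ∧ (p.1 ∪ p.2).card = k + 1) with hQ
  have hQmem : ∀ p ∈ Q, p.1 ∈ S ∧ p.2 ∈ S ∧ p.1 ≠ p.2 ∧ (p.1 ∪ p.2).card = k + 1 := by
    intro p hp
    simp only [hQ, mem_filter, Finset.mem_product] at hp
    exact ⟨hp.1.1, hp.1.2, hp.2.1, hp.2.2⟩
  -- no two distinct members of S are comparable
  have hnc : ∀ p1 ∈ S, ∀ p2 ∈ S, p1 ≠ p2 → ¬ p1 ⊆ p2 := by
    intro p1 h1 p2 h2 hne hsub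
    exact hne (Finset.eq_of_subset_of_card_le hsub (by rw [hS _ h1, hS _ h2]))
  -- Q counted by unions
  have hQ1 : Q.card = ∑ t ∈ T, d t * (d t - 1) := by
    have hmap : ∀ p ∈ Q, p.1 ∪ p.2 ∈ T := by
      intro p hp
      obtain ⟨h1, h2, hne, hcard⟩ := hQmem p hp
      exact (hT _).mpr ⟨hcard, p.1, h1, Finset.subset_union_left⟩
    rw [Finset.card_eq_sum_card_fiberwise hmap]
    refine Finset.sum_congr rfl (fun t ht => ?_)
    have hfib : Q.filter (fun p => p.1 ∪ p.2 = t) = (S.filter (fun s => s ⊆ t)).offDiag := by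
      ext p
      simp only [Finset.mem_offDiag, mem_filter, hQ, Finset.mem_product]
      constructor
      · rintro ⟨⟨⟨h1, h2⟩, hne, hcard⟩, hu⟩
        exact ⟨⟨h1, hu ▸ Finset.subset_union_left⟩, ⟨h2, hu ▸ Finset.subset_union_right⟩, hne⟩
      · rintro ⟨⟨h1, hs1⟩, ⟨h2, hs2⟩, hne⟩
        have htc : t.card = k + 1 := ((hT t).mp ht).1
        have hsub : p.1 ∪ p.2 ⊆ t := Finset.union_subset hs1 hs2
        have hss : p.1 ⊂ p.1 ∪ p.2 := by
          refine Finset.ssubset_iff_subset_ne.mpr ⟨Finset.subset_union_left, fun h => ?_⟩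
          exact hnc p.2 h2 p.1 h1 (Ne.symm hne) (Finset.union_eq_left.mp h.symm)
        have hlt : k < (p.1 ∪ p.2).card := by
          have := Finset.card_lt_card hss
          rwa [hS _ h1] at this
        have hle : (p.1 ∪ p.2).card ≤ k + 1 := htc ▸ Finset.card_le_card hsub
        have heq : p.1 ∪ p.2 = t := Finset.eq_of_subset_of_card_le hsub (by omega)
        exact ⟨⟨⟨h1, h2⟩, hne, by omega⟩, heq⟩
    rw [hfib, Finset.offDiag_card]
    exact aux_mul _
  -- Q counted by intersections
  have hQ2 : Q.card = ∑ r ∈ R, m r * (m r - 1) := by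
    have hintcard : ∀ p1 ∈ S, ∀ p2 ∈ S, p1 ≠ p2 → (p1 ∩ p2).card ≤ k - 1 := by
      intro p1 h1 p2 h2 hne
      by_contra hcon
      have hge : k ≤ (p1 ∩ p2).card := by omega
      have : p1 ∩ p2 = p1 :=
        Finset.eq_of_subset_of_card_le Finset.inter_subset_left (by rw [hS _ h1]; exact hge)
      exact hnc p1 h1 p2 h2 hne (Finset.inter_eq_left.mp this)
    have hmap : ∀ p ∈ Q, p.1 ∩ p.2 ∈ R := by
      intro p hp
      obtain ⟨h1, h2, hne, hcard⟩ := hQmem p hp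
      have hid := Finset.card_union_add_card_inter p.1 p.2
      rw [hcard, hS _ h1, hS _ h2] at hid
      rw [hR, Finset.mem_powersetCard_univ]
      omega
    rw [Finset.card_eq_sum_card_fiberwise hmap]
    refine Finset.sum_congr rfl (fun r hr => ?_)
    have hrcard : r.card = k - 1 := Finset.mem_powersetCard_univ.mp hr
    have hfib : Q.filter (fun p => p.1 ∩ p.2 = r) = (S.filter (fun s => r ⊆ s)).offDiag := by
      ext p
      simp only [Finset.mem_offDiag, mem_filter, hQ, Finset.mem_product]
      constructor
      · rintro ⟨⟨⟨h1, h2⟩, hne, hcard⟩, hi⟩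
        exact ⟨⟨h1, hi ▸ Finset.inter_subset_left⟩, ⟨h2, hi ▸ Finset.inter_subset_right⟩, hne⟩
      · rintro ⟨⟨h1, hs1⟩, ⟨h2, hs2⟩, hne⟩
        have hle : (p.1 ∩ p.2).card ≤ k - 1 := hintcard p.1 h1 p.2 h2 hne
        have heq : r = p.1 ∩ p.2 :=
          Finset.eq_of_subset_of_card_le (Finset.subset_inter hs1 hs2) (by rw [hrcard]; exact hle)
        have hid := Finset.card_union_add_card_inter p.1 p.2
        rw [hS _ h1, hS _ h2, ← heq, hrcard] at hid
        exact ⟨⟨⟨h1, h2⟩, hne, by omega⟩, heq.symm⟩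
    rw [hfib, Finset.offDiag_card]
    exact aux_mul _
  -- degree bounds on T
  have hdub : ∀ t ∈ T, (k + 1) + d t * (d t - 1) ≤ (k + 1) * d t := by
    intro t ht
    have h1 : 1 ≤ d t := by
      obtain ⟨_, s, hs, hst⟩ := (hT t).mp ht
      exact Finset.card_pos.mpr ⟨s, Finset.mem_filter.mpr ⟨hs, hst⟩⟩
    have h2 : d t ≤ k + 1 := by
      have hsub : S.filter (fun s => s ⊆ t) ⊆ t.powersetCard k := by
        intro s hs
        rw [Finset.mem_filter] at hs
        exact Finset.mem_powersetCard.mpr ⟨hs.2, hS s hs.1⟩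
      have hle := Finset.card_le_card hsub
      rwa [Finset.card_powersetCard, ((hT t).mp ht).1, Nat.choose_succ_self_right] at hle
    obtain ⟨e, he⟩ : ∃ e, d t = e + 1 := ⟨d t - 1, by omega⟩
    rw [he]
    have he1 : e + 1 ≤ k + 1 := he ▸ h2
    calc (k + 1) + (e + 1) * (e + 1 - 1) = (e + 1) * e + (k + 1) := by
          rw [Nat.add_sub_cancel]; ring
      _ ≤ (k + 1) * e + (k + 1) := by
          exact Nat.add_le_add_right (Nat.mul_le_mul_right e he1) (k + 1)
      _ = (k + 1) * (e + 1) := by ring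
  have hE : (k + 1) * T.card + ∑ t ∈ T, d t * (d t - 1) ≤ (k + 1) * ∑ t ∈ T, d t := by
    calc (k + 1) * T.card + ∑ t ∈ T, d t * (d t - 1)
        = ∑ t ∈ T, ((k + 1) + d t * (d t - 1)) := by
          rw [Finset.sum_add_distrib, Finset.sum_const, smul_eq_mul, mul_comm]
      _ ≤ ∑ t ∈ T, (k + 1) * d t := Finset.sum_le_sum hdub
      _ = (k + 1) * ∑ t ∈ T, d t := (Finset.mul_sum _ _ _).symm
  -- Cauchy–Schwarz in ℕ
  have hCS : (∑ r ∈ R, m r) ^ 2 ≤ C * ∑ r ∈ R, (m r) ^ 2 := by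
    have h := Finset.sum_mul_sq_le_sq_mul_sq (R := ℕ) R (fun _ => 1) m
    simpa [hRcard, mul_comm] using h
  have hMsq : ∑ r ∈ R, (m r) ^ 2 = ∑ r ∈ R, m r * (m r - 1) + ∑ r ∈ R, m r := by
    rw [← Finset.sum_add_distrib]
    refine Finset.sum_congr rfl (fun r _ => ?_)
    rcases Nat.eq_zero_or_pos (m r) with h | h
    · simp [h]
    · obtain ⟨e, he⟩ : ∃ e, m r = e + 1 := ⟨m r - 1, by omega⟩
      rw [he, Nat.add_sub_cancel]; ring
  -- assemble the ℕ inequality for the Cauchy–Schwarz part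
  have hF : k ^ 2 * S.card ^ 2 ≤ C * (∑ t ∈ T, d t * (d t - 1)) + C * (k * S.card) := by
    calc k ^ 2 * S.card ^ 2 = (k * S.card) ^ 2 := by ring
      _ = (∑ r ∈ R, m r) ^ 2 := by rw [hB]
      _ ≤ C * ∑ r ∈ R, (m r) ^ 2 := hCS
      _ = C * (∑ r ∈ R, m r * (m r - 1)) + C * (∑ r ∈ R, m r) := by rw [hMsq, Nat.mul_add]
      _ = C * (∑ t ∈ T, d t * (d t - 1)) + C * (k * S.card) := by rw [← hQ2, hQ1, hB]
  -- final assembly over ℤ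
  have hE' : ((k : ℤ) + 1) * T.card + ((∑ t ∈ T, d t * (d t - 1) : ℕ) : ℤ)
      ≤ ((k : ℤ) + 1) * ((∑ t ∈ T, d t : ℕ) : ℤ) := by exact_mod_cast hE
  have hA' : ((∑ t ∈ T, d t : ℕ) : ℤ) = ((n : ℤ) - k) * S.card := by
    rw [hA]; push_cast [Nat.cast_sub hkn]; ring
  have hF' : (k : ℤ) ^ 2 * (S.card : ℤ) ^ 2
      ≤ (C : ℤ) * ((∑ t ∈ T, d t * (d t - 1) : ℕ) : ℤ) + (C : ℤ) * ((k : ℤ) * S.card) := by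
    exact_mod_cast hF
  have hCnn : (0 : ℤ) ≤ (C : ℤ) := Int.ofNat_nonneg C
  rw [hA'] at hE'
  have hE'' := mul_le_mul_of_nonneg_left hE' hCnn
  nlinarith [hE'', hF']
end

section
/- Let k ≥ 2 and let Δ be a finite simplicial complex with n vertices and dimension at least k − 1 (i.e., Δ has at least one face of cardinality k). Then m_k(Δ) ≥ k²·f_{k−1}(Δ)²/((k+1)·C(n, k−1)) − (n·(k−1) − k·(k−2))·f_{k−1}(Δ)/(k+1) − f_k(Δ); equivalently, (k+1)·C(n, k−1)·(m_k(Δ) + f_k(Δ)) ≥ k²·f_{k−1}(Δ)² − (n·(k−1) − k·(k−2))·C(n, k−1)·f_{k−1}(Δ). -/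
/-- A finite abstract simplicial complex on vertex set `Fin n`: a collection of subsets of
`Fin n` (the faces) closed under taking subsets and containing every singleton. -/
structure AbsComplex (n : ℕ) where
  faces : Finset (Finset (Fin n))
  down_closed : ∀ F ∈ faces, ∀ G ⊆ F, G ∈ faces
  singleton_mem : ∀ v : Fin n, ({v} : Finset (Fin n)) ∈ faces

namespace AbsComplex

variable {n : ℕ}

/-- `fNum Δ i` is the number of faces of `Δ` of cardinality `i + 1`
(i.e. of dimension `i`). -/
def fNum (Δ : AbsComplex n) (i : ℕ) : ℕ :=
  (Δ.faces.filter fun F => F.card = i + 1).card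

/-- A missing face of `Δ`: a set which is not a face but all of whose proper subsets
are faces. -/
def IsMissing (Δ : AbsComplex n) (F : Finset (Fin n)) : Prop :=
  F ∉ Δ.faces ∧ ∀ G ⊂ F, G ∈ Δ.faces

/-- `mNum Δ i` is the number of missing faces of `Δ` of cardinality `i + 1`
(i.e. of dimension `i`). -/
noncomputable def mNum (Δ : AbsComplex n) (i : ℕ) : ℕ :=
  {F : Finset (Fin n) | Δ.IsMissing F ∧ F.card = i + 1}.ncard

/-- The faces of the link of the face `F` in `Δ`: all faces `G` with `G ∩ F = ∅`
and `G ∪ F` a face. -/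
def linkFaces (Δ : AbsComplex n) (F : Finset (Fin n)) : Finset (Finset (Fin n)) :=
  Δ.faces.filter fun G => G ∩ F = ∅ ∧ G ∪ F ∈ Δ.faces

/-- The reduced Euler characteristic `χ̃ = −1 + f₀ − f₁ + f₂ − ⋯` of a (downward closed,
nonempty) collection of faces, computed as `∑_F (−1)^{|F|−1}` over all faces `F`
(including the empty face). -/
def reducedEuler (s : Finset (Finset (Fin n))) : ℤ :=
  ∑ F ∈ s, (-1 : ℤ) ^ (F.card + 1)

/-- `Δ.IsEulerianDim D` says that `Δ` is an Eulerian complex of dimension `D`: every face has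
cardinality at most `D + 1`, some face has cardinality `D + 1`, and for every face `F`
(including the empty face) the reduced Euler characteristic of the link of `F` equals
`(−1)^{D − |F|}` (written as `(−1)^{D + |F|}`, which has the same parity). -/
def IsEulerianDim (Δ : AbsComplex n) (D : ℕ) : Prop :=
  (∀ F ∈ Δ.faces, F.card ≤ D + 1) ∧ (∃ F ∈ Δ.faces, F.card = D + 1) ∧
    ∀ F ∈ Δ.faces, reducedEuler (Δ.linkFaces F) = (-1 : ℤ) ^ (D + F.card)

/-- `Δ` is `j`-neighborly: every `j`-element subset of the vertex set is a face. -/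
def Neighborly (Δ : AbsComplex n) (j : ℕ) : Prop :=
  ∀ S : Finset (Fin n), S.card = j → S ∈ Δ.faces

/-- `Δ` is flag: every missing face has cardinality `2`. -/
def Flag (Δ : AbsComplex n) : Prop :=
  ∀ F : Finset (Fin n), Δ.IsMissing F → F.card = 2

end AbsComplex

/-!
Let `𝒜` be the set of faces of cardinality `k`, so `#𝒜 = f_{k-1}`. For a `(k-1)`-set `s` let
`d s` be the number of members of `𝒜` containing `s`, and for a `(k+1)`-set `t` let `c t` be the
number of members of `𝒜` contained in `t`. Ordered pairs of distinct members of `𝒜` meeting in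
`k - 1` points are counted once by their intersection and once by their union, so
`∑ d (d - 1) = ∑ c (c - 1)`. Moreover `∑ d = k #𝒜`, `∑ c = (n - k) #𝒜`, and `c t ≤ k + 1` with
equality exactly when `t` is a face or a missing face, whence
`c (c - 1) ≤ (k - 1) c + (k + 1) [c = k + 1]`. Cauchy–Schwarz, `(∑ d)² ≤ C(n, k-1) ∑ d²`,
turns these into the inequality.
-/

open Finset

namespace Finset

theorem card_inter_lt_of_ne {α : Type*} [DecidableEq α] {A B : Finset α} (hAB : #A = #B)
    (hne : A ≠ B) : #(A ∩ B) < #A :=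
  card_lt_card <| inter_subset_left.ssubset_of_ne fun h =>
    hne <| eq_of_subset_of_card_le (inter_eq_left.1 h) hAB.ge

theorem natCast_card_offDiag {α : Type*} [DecidableEq α] (s : Finset α) :
    (#s.offDiag : ℤ) = (#s : ℤ) ^ 2 - #s := by
  rw [offDiag_card, Nat.cast_sub (Nat.le_mul_self _)]
  push_cast; ring

end Finset

namespace SetFamily

variable {α : Type*} [DecidableEq α]

def upDegree (𝒜 : Finset (Finset α)) (s : Finset α) : ℕ := #{A ∈ 𝒜 | s ⊆ A}

def downDegree (𝒜 : Finset (Finset α)) (t : Finset α) : ℕ := #{A ∈ 𝒜 | A ⊆ t}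

def adjacentPairs (𝒜 : Finset (Finset α)) (k : ℕ) : Finset (Finset α × Finset α) :=
  {p ∈ 𝒜.offDiag | #(p.1 ∩ p.2) = k}

variable [Fintype α]

def completeSets (𝒜 : Finset (Finset α)) (k : ℕ) : Finset (Finset α) :=
  {t ∈ powersetCard (k + 2) univ | t.powersetCard (k + 1) ⊆ 𝒜}

variable {𝒜 : Finset (Finset α)} {k : ℕ}

theorem sum_upDegree (h𝒜 : (𝒜 : Set (Finset α)).Sized (k + 1)) :
    ∑ s ∈ powersetCard k univ, upDegree 𝒜 s = (k + 1) * #𝒜 := by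
  change ∑ s ∈ _, #(𝒜.bipartiteAbove (· ⊆ ·) s) = _
  rw [sum_card_bipartiteAbove_eq_sum_card_bipartiteBelow, mul_comm, ← smul_eq_mul, ← sum_const]
  refine sum_congr rfl fun A hA => ?_
  have hbelow : {s ∈ powersetCard k (univ : Finset α) | s ⊆ A} = A.powersetCard k := by
    ext; simp [and_comm]
  rw [bipartiteBelow, hbelow, card_powersetCard, h𝒜 hA, Nat.choose_succ_self_right]

theorem sum_downDegree (h𝒜 : (𝒜 : Set (Finset α)).Sized (k + 1)) :
    ∑ t ∈ powersetCard (k + 2) univ, (downDegree 𝒜 t : ℤ) =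
      ((Fintype.card α : ℤ) - (k + 1)) * #𝒜 := by
  rw [← Nat.cast_sum]
  change ((∑ t ∈ _, #(𝒜.bipartiteAbove (fun t A => A ⊆ t) t) : ℕ) : ℤ) = _
  rw [sum_card_bipartiteAbove_eq_sum_card_bipartiteBelow, Nat.cast_sum, mul_comm, ← nsmul_eq_mul,
    ← sum_const]
  refine sum_congr rfl fun A hA => ?_
  have hA_le : k + 1 ≤ Fintype.card α := h𝒜 hA ▸ card_le_univ A
  rw [bipartiteBelow,
    card_filter_powersetCard_subset A univ _ (subset_univ A) (by rw [h𝒜 hA]; omega), card_univ,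
    h𝒜 hA, show k + 2 - (k + 1) = 1 by omega, Nat.choose_one_right, Nat.cast_sub hA_le]
  push_cast; ring

omit [Fintype α] in
theorem mem_adjacentPairs {p : Finset α × Finset α} :
    p ∈ adjacentPairs 𝒜 k ↔ p.1 ∈ 𝒜 ∧ p.2 ∈ 𝒜 ∧ p.1 ≠ p.2 ∧ #(p.1 ∩ p.2) = k := by
  simp [adjacentPairs, and_assoc]

omit [Fintype α] in
theorem filter_adjacentPairs_inter_eq (h𝒜 : (𝒜 : Set (Finset α)).Sized (k + 1)) {s : Finset α}
    (hs : #s = k) : {p ∈ adjacentPairs 𝒜 k | p.1 ∩ p.2 = s} = {A ∈ 𝒜 | s ⊆ A}.offDiag := by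
  ext ⟨A, B⟩
  simp only [mem_filter, mem_adjacentPairs, mem_offDiag]
  constructor
  · rintro ⟨⟨hA, hB, hAB, -⟩, rfl⟩
    exact ⟨⟨hA, inter_subset_left⟩, ⟨hB, inter_subset_right⟩, hAB⟩
  · rintro ⟨⟨hA, hsA⟩, ⟨hB, hsB⟩, hAB⟩
    have hlt := card_inter_lt_of_ne ((h𝒜 hA).trans (h𝒜 hB).symm) hAB
    have hAB_eq : A ∩ B = s :=
      (eq_of_subset_of_card_le (subset_inter hsA hsB) (by rw [h𝒜 hA] at hlt; omega)).symm
    exact ⟨⟨hA, hB, hAB, hAB_eq ▸ hs⟩, hAB_eq⟩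

omit [Fintype α] in
theorem filter_adjacentPairs_union_eq (h𝒜 : (𝒜 : Set (Finset α)).Sized (k + 1)) {t : Finset α}
    (ht : #t = k + 2) : {p ∈ adjacentPairs 𝒜 k | p.1 ∪ p.2 = t} = {A ∈ 𝒜 | A ⊆ t}.offDiag := by
  ext ⟨A, B⟩
  simp only [mem_filter, mem_adjacentPairs, mem_offDiag]
  have hcard := card_union_add_card_inter A B
  constructor
  · rintro ⟨⟨hA, hB, hAB, -⟩, rfl⟩
    exact ⟨⟨hA, subset_union_left⟩, ⟨hB, subset_union_right⟩, hAB⟩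
  · rintro ⟨⟨hA, hAt⟩, ⟨hB, hBt⟩, hAB⟩
    have hlt := card_inter_lt_of_ne ((h𝒜 hA).trans (h𝒜 hB).symm) hAB
    rw [h𝒜 hA, h𝒜 hB] at hcard
    rw [h𝒜 hA] at hlt
    have hAB_eq : A ∪ B = t := eq_of_subset_of_card_le (union_subset hAt hBt) (by omega)
    exact ⟨⟨hA, hB, hAB, by rw [hAB_eq] at hcard; omega⟩, hAB_eq⟩

theorem card_adjacentPairs_eq_sum_offDiag_above (h𝒜 : (𝒜 : Set (Finset α)).Sized (k + 1)) :
    #(adjacentPairs 𝒜 k) = ∑ s ∈ powersetCard k univ, #{A ∈ 𝒜 | s ⊆ A}.offDiag := by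
  rw [card_eq_sum_card_fiberwise (f := fun p => p.1 ∩ p.2) (t := powersetCard k univ)]
  · exact sum_congr rfl fun s hs =>
      by rw [filter_adjacentPairs_inter_eq h𝒜 (mem_powersetCard.1 hs).2]
  · exact fun p hp => mem_powersetCard.2 ⟨subset_univ _, (mem_adjacentPairs.1 hp).2.2.2⟩

theorem card_adjacentPairs_eq_sum_offDiag_below (h𝒜 : (𝒜 : Set (Finset α)).Sized (k + 1)) :
    #(adjacentPairs 𝒜 k) = ∑ t ∈ powersetCard (k + 2) univ, #{A ∈ 𝒜 | A ⊆ t}.offDiag := by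
  rw [card_eq_sum_card_fiberwise (f := fun p => p.1 ∪ p.2) (t := powersetCard (k + 2) univ)]
  · exact sum_congr rfl fun t ht =>
      by rw [filter_adjacentPairs_union_eq h𝒜 (mem_powersetCard.1 ht).2]
  · intro p hp
    obtain ⟨hA, hB, -, hinter⟩ := mem_adjacentPairs.1 hp
    have hcard := card_union_add_card_inter p.1 p.2
    rw [h𝒜 hA, h𝒜 hB, hinter] at hcard
    exact mem_powersetCard.2 ⟨subset_univ _, show #(p.1 ∪ p.2) = k + 2 by omega⟩

theorem sum_upDegree_sq_sub_eq (h𝒜 : (𝒜 : Set (Finset α)).Sized (k + 1)) :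
    ∑ s ∈ powersetCard k univ, ((upDegree 𝒜 s : ℤ) ^ 2 - upDegree 𝒜 s) =
      ∑ t ∈ powersetCard (k + 2) univ, ((downDegree 𝒜 t : ℤ) ^ 2 - downDegree 𝒜 t) := by
  have h := congrArg (Nat.cast : ℕ → ℤ) <|
    (card_adjacentPairs_eq_sum_offDiag_above h𝒜).symm.trans
      (card_adjacentPairs_eq_sum_offDiag_below h𝒜)
  simp only [Nat.cast_sum, natCast_card_offDiag] at h
  exact h

omit [Fintype α] in
theorem downDegree_eq_card_inter (h𝒜 : (𝒜 : Set (Finset α)).Sized (k + 1)) (t : Finset α) :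
    downDegree 𝒜 t = #(t.powersetCard (k + 1) ∩ 𝒜) := by
  rw [downDegree, inter_comm]
  congr 1
  ext A
  simp only [mem_filter, mem_inter, mem_powersetCard]
  exact ⟨fun ⟨hA, hAt⟩ => ⟨hA, hAt, h𝒜 hA⟩, fun ⟨hA, hAt, _⟩ => ⟨hA, hAt⟩⟩

omit [Fintype α] in
theorem downDegree_le (h𝒜 : (𝒜 : Set (Finset α)).Sized (k + 1)) {t : Finset α}
    (ht : #t = k + 2) : downDegree 𝒜 t ≤ k + 2 := by
  rw [downDegree_eq_card_inter h𝒜, ← Nat.choose_succ_self_right (k + 1), ← ht,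
    ← card_powersetCard]
  exact card_le_card inter_subset_left

omit [Fintype α] in
theorem downDegree_eq_iff (h𝒜 : (𝒜 : Set (Finset α)).Sized (k + 1)) {t : Finset α}
    (ht : #t = k + 2) : downDegree 𝒜 t = k + 2 ↔ t.powersetCard (k + 1) ⊆ 𝒜 := by
  have hpow : #(t.powersetCard (k + 1)) = k + 2 := by
    rw [card_powersetCard, ht, Nat.choose_succ_self_right]
  rw [downDegree_eq_card_inter h𝒜, ← inter_eq_left, ← eq_iff_card_le_of_subset inter_subset_left,
    hpow]
  have := card_le_card (inter_subset_left (s₁ := t.powersetCard (k + 1)) (s₂ := 𝒜))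
  omega

theorem card_completeSets_eq_sum_ite (h𝒜 : (𝒜 : Set (Finset α)).Sized (k + 1)) :
    (#(completeSets 𝒜 k) : ℤ) =
      ∑ t ∈ powersetCard (k + 2) univ, if (downDegree 𝒜 t : ℤ) = k + 2 then 1 else 0 := by
  rw [sum_boole, completeSets]
  congr 2
  refine filter_congr fun t ht => ?_
  rw [← downDegree_eq_iff h𝒜 (mem_powersetCard.1 ht).2]
  norm_cast

theorem sum_downDegree_sq_sub_le (h𝒜 : (𝒜 : Set (Finset α)).Sized (k + 1)) :
    ∑ t ∈ powersetCard (k + 2) univ, ((downDegree 𝒜 t : ℤ) ^ 2 - downDegree 𝒜 t) ≤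
      k * ∑ t ∈ powersetCard (k + 2) univ, (downDegree 𝒜 t : ℤ) +
        (k + 2) * #(completeSets 𝒜 k) := by
  rw [card_completeSets_eq_sum_ite h𝒜, mul_sum, mul_sum, ← sum_add_distrib]
  refine sum_le_sum fun t ht => ?_
  have hle : (downDegree 𝒜 t : ℤ) ≤ k + 2 := by
    exact_mod_cast downDegree_le h𝒜 (mem_powersetCard.1 ht).2
  split_ifs with h
  · rw [h]; apply le_of_eq; ring
  · have : (downDegree 𝒜 t : ℤ) ≤ k + 1 := by omega
    nlinarith [(downDegree 𝒜 t).cast_nonneg (α := ℤ)]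

theorem sq_card_le_choose_mul (h𝒜 : (𝒜 : Set (Finset α)).Sized (k + 1)) :
    ((k + 1) * #𝒜 : ℤ) ^ 2 ≤ (Fintype.card α).choose k *
      ((k * Fintype.card α - k ^ 2 + 1) * #𝒜 + (k + 2) * #(completeSets 𝒜 k)) := by
  have hsum : ∑ s ∈ powersetCard k univ, (upDegree 𝒜 s : ℤ) = (k + 1) * #𝒜 := by
    exact_mod_cast sum_upDegree h𝒜
  have hcs := sq_sum_le_card_mul_sum_sq (s := powersetCard k univ) (f := (upDegree 𝒜 · : _ → ℤ))
  have hpairs := sum_upDegree_sq_sub_eq h𝒜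
  have hbelow := sum_downDegree_sq_sub_le h𝒜
  rw [sum_downDegree h𝒜] at hbelow
  rw [sum_sub_distrib, hsum] at hpairs
  rw [hsum, card_powersetCard, card_univ] at hcs
  calc ((k + 1) * #𝒜 : ℤ) ^ 2
      ≤ (Fintype.card α).choose k * ∑ s ∈ powersetCard k univ, (upDegree 𝒜 s : ℤ) ^ 2 := hcs
    _ ≤ _ := by gcongr; linarith

end SetFamily

namespace AbsComplex

variable {n : ℕ}

theorem powersetCard_subset_faces_iff (Δ : AbsComplex n) {k : ℕ} {t : Finset (Fin n)}
    (ht : #t = k + 1) : t.powersetCard k ⊆ Δ.faces ↔ t ∈ Δ.faces ∨ Δ.IsMissing t := by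
  constructor
  · intro hsub
    refine or_iff_not_imp_left.2 fun hnot => ⟨hnot, fun G hG => ?_⟩
    have hGk : #G < k + 1 := ht ▸ card_lt_card hG
    obtain ⟨A, hGA, hAt, hA⟩ := exists_subsuperset_card_eq hG.subset (n := k) (by omega) (by omega)
    exact Δ.down_closed A (hsub (mem_powersetCard.2 ⟨hAt, hA⟩)) G hGA
  · rintro (hface | hmiss) A hA
    · exact Δ.down_closed t hface A (mem_powersetCard.1 hA).1
    · obtain ⟨hAt, hA⟩ := mem_powersetCard.1 hA
      exact hmiss.2 A (ssubset_of_subset_of_ne hAt (by rintro rfl; omega))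

theorem card_completeSets_faces (Δ : AbsComplex n) (k : ℕ) :
    #(SetFamily.completeSets {A ∈ Δ.faces | #A = k + 1} k) =
      Δ.fNum (k + 1) + Δ.mNum (k + 1) := by
  classical
  set Q := SetFamily.completeSets {A ∈ Δ.faces | #A = k + 1} k
  have hQ : ∀ t, t ∈ Q ↔ #t = k + 2 ∧ (t ∈ Δ.faces ∨ Δ.IsMissing t) := by
    intro t
    simp only [Q, SetFamily.completeSets, mem_filter, mem_powersetCard, subset_univ, true_and]
    refine and_congr_right fun ht => ?_
    rw [← Δ.powersetCard_subset_faces_iff ht]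
    exact ⟨fun h => h.trans (filter_subset _ _),
      fun h A hA => mem_filter.2 ⟨h hA, (mem_powersetCard.1 hA).2⟩⟩
  have hfaces : {t ∈ Q | t ∈ Δ.faces} = {t ∈ Δ.faces | #t = k + 1 + 1} := by
    ext t; simp only [mem_filter, hQ]; tauto
  have hmissing : Δ.mNum (k + 1) = #{t ∈ Q | t ∉ Δ.faces} := by
    rw [mNum, ← Set.ncard_coe_finset]
    congr 1
    ext t
    simp only [Set.mem_ofPred_eq, coe_filter, hQ]
    constructor
    · rintro ⟨hmiss, ht⟩; exact ⟨⟨ht, Or.inr hmiss⟩, hmiss.1⟩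
    · rintro ⟨⟨ht, hface | hmiss⟩, hnot⟩
      · exact absurd hface hnot
      · exact ⟨hmiss, ht⟩
  rw [hmissing, fNum, ← hfaces, card_filter_add_card_filter_not]

end AbsComplex

theorem statement1_general {n k : ℕ} (hk : 2 ≤ k) (Δ : AbsComplex n) :
    ((k : ℤ) + 1) * (n.choose (k - 1) : ℤ) * ((Δ.mNum k : ℤ) + (Δ.fNum k : ℤ)) ≥
      (k : ℤ) ^ 2 * (Δ.fNum (k - 1) : ℤ) ^ 2 -
        ((n : ℤ) * ((k : ℤ) - 1) - (k : ℤ) * ((k : ℤ) - 2)) * (n.choose (k - 1) : ℤ) *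
          (Δ.fNum (k - 1) : ℤ) := by
  obtain ⟨j, rfl⟩ : ∃ j, k = j + 1 := ⟨k - 1, by omega⟩
  have hsized : (({A ∈ Δ.faces | #A = j + 1} : Finset _) : Set (Finset (Fin n))).Sized (j + 1) :=
    fun A hA => (mem_filter.1 hA).2
  have key := SetFamily.sq_card_le_choose_mul hsized
  rw [Δ.card_completeSets_faces, Fintype.card_fin] at key
  have hf : #{A ∈ Δ.faces | #A = j + 1} = Δ.fNum j := rfl
  rw [hf] at key
  rw [Nat.add_sub_cancel, ge_iff_le]
  push_cast at key ⊢
  linear_combination key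

/-- For `k ≥ 2` and a simplicial complex `Δ` with `n` vertices and dimension at
least `k − 1`, one has
`(k+1)·C(n,k−1)·(m_k + f_k) ≥ k²·f_{k−1}² − (n·(k−1) − k·(k−2))·C(n,k−1)·f_{k−1}`. -/
theorem statement1 {n k : ℕ} (hk : 2 ≤ k) (Δ : AbsComplex n)
    (hdim : ∃ F ∈ Δ.faces, F.card = k) :
    ((k : ℤ) + 1) * (n.choose (k - 1) : ℤ) * ((Δ.mNum k : ℤ) + (Δ.fNum k : ℤ)) ≥
      (k : ℤ) ^ 2 * (Δ.fNum (k - 1) : ℤ) ^ 2 -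
        ((n : ℤ) * ((k : ℤ) - 1) - (k : ℤ) * ((k : ℤ) - 2)) * (n.choose (k - 1) : ℤ) *
          (Δ.fNum (k - 1) : ℤ) :=
  statement1_general hk Δ
end

section
/- Let k ≥ 2 and let Δ be an Eulerian simplicial complex of dimension 2k − 1 with n ≥ 2k + 1 vertices that is (k−1)-neighborly. Then f_k(Δ) + k·(C(n, k) − f_{k−1}(Δ)) = Σ_{i=0}^{k} C(2k−i, k−1)·C(n−2k−1+i, i) + C(n−k−2, k−1). (The right-hand side equals the number of k-dimensional faces of the cyclic 2k-polytope with n vertices, and C(n, k) − f_{k−1}(Δ) equals m_{k−1}(Δ), the number of missing faces of cardinality k.) -/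
/-!
Let `f m` be the number of faces of cardinality `m` and `h` the h-vector of `Δ`. Summing the
Euler condition over the links of all faces of a fixed cardinality gives Klee's relations
`f i = ∑ₘ (-1)^(2k+m) C(m, i) f m`, and these are equivalent to the Dehn–Sommerville symmetry
`h (2k - i) = h i`. Neighborliness gives `f j = C(n, j)` for `j < k`, which pins down
`h i = C(n - 2k - 1 + i, i)` for `i < k`, while `h k` exceeds this value by `f k - C(n, k)`.
Expressing `f (k + 1)` through `h 0, …, h (k + 1)` and using `h (k + 1) = h (k - 1)` gives
the formula.
-/

open Finset

lemma neg_one_pow_congr_mod_two {a b : ℕ} (h : a % 2 = b % 2) : (-1 : ℤ) ^ a = (-1) ^ b := by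
  rw [neg_one_pow_eq_pow_mod_two, h, ← neg_one_pow_eq_pow_mod_two]

lemma sum_neg_one_pow_mul_choose_mul_choose_sub {m p : ℕ} (hm : m ≤ p) (i : ℕ) :
    ∑ j ∈ range (m + 1), (-1 : ℤ) ^ j * m.choose j * (p - j).choose i =
      if m ≤ i then ((p - m).choose (i - m) : ℤ) else 0 := by
  have hdiff : (fwdDiff 1)^[m] (fun x ↦ x.choose i : ℕ → ℤ) (p - m) =
      ∑ j ∈ range (m + 1), (-1 : ℤ) ^ j * m.choose j * (p - j).choose i := by
    rw [fwdDiff_iter_eq_sum_shift, ← sum_range_reflect]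
    refine sum_congr rfl fun j hj ↦ ?_
    have hj : j ≤ m := Nat.lt_succ_iff.mp (mem_range.mp hj)
    rw [show m + 1 - 1 - j = m - j by omega, Nat.choose_symm hj, smul_eq_mul, smul_eq_mul, mul_one,
      show m - (m - j) = j by omega, show p - m + (m - j) = p - j by omega]
  rw [← hdiff]
  split_ifs with hmi
  · obtain ⟨t, rfl⟩ := Nat.exists_eq_add_of_le hmi
    rw [fwdDiff_iter_choose, Nat.add_sub_cancel_left]
  · obtain ⟨t, rfl⟩ := Nat.exists_eq_add_of_lt (not_le.mp hmi)
    have hconst : (fwdDiff 1)^[i] (fun x ↦ x.choose i : ℕ → ℤ) = fun _ ↦ 1 := by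
      simpa using fwdDiff_iter_choose 0 i
    rw [show i + t + 1 = (t + 1) + i by omega, Function.iterate_add_apply, hconst,
      Function.iterate_succ_apply, fwdDiff_const]
    simp [fwdDiff_iter_eq_sum_shift]

lemma choose_sub_mul_choose_sub {p m i j : ℕ} (hji : j ≤ i) (him : i ≤ m) (hmp : m ≤ p) :
    (p - i).choose (p - m) * (p - j).choose (i - j) =
      (p - j).choose (p - m) * (m - j).choose (i - j) := by
  rw [mul_comm, Nat.choose_symm_of_eq_add (show p - j = (i - j) + (p - i) by omega),
    Nat.choose_mul (by omega), show p - j - (p - m) = m - j by omega,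
    show p - i - (p - m) = m - i by omega,
    Nat.choose_symm_of_eq_add (show m - j = (m - i) + (i - j) by omega)]

/-- The h-vector of a `(p - 1)`-dimensional complex having `f j` faces of cardinality `j`. -/
def hNum (p : ℕ) (f : ℕ → ℤ) (i : ℕ) : ℤ :=
  ∑ j ∈ range (i + 1), (-1) ^ (i + j) * (p - j).choose (i - j) * f j

lemma hNum_sub_hNum {p i : ℕ} {f g : ℕ → ℤ} (h : ∀ j < i, f j = g j) :
    hNum p f i - hNum p g i = f i - g i := by
  rw [hNum, hNum, sum_range_succ, sum_range_succ,
    sum_congr rfl fun j hj ↦ by rw [h j (mem_range.mp hj)], ← two_mul, pow_mul, neg_one_sq,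
    one_pow, Nat.sub_self, Nat.choose_zero_right]
  ring

/- `(-1)^(i-j) C(p-j, i-j)` is a binomial coefficient with negative upper index `i-p-1`,
so this is the Chu–Vandermonde identity. -/
lemma hNum_choose {p N i : ℕ} (hi : i ≤ p) (hpN : p < N) :
    hNum p (fun j ↦ N.choose j) i = (N - (p + 1) + i).choose i := by
  set r : ℤ := -((p - i + 1 : ℕ) : ℤ)
  have hneg : ∀ j ≤ i,
      (-1 : ℤ) ^ (i + j) * (p - j).choose (i - j) = Ring.choose r (i - j) := by
    intro j hj
    rw [Ring.choose_neg, Units.smul_def, Int.coe_negOnePow_natCast,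
      neg_one_pow_congr_mod_two (show (i + j) % 2 = (i - j) % 2 by omega),
      show ((p - i + 1 : ℕ) : ℤ) + ((i - j : ℕ) : ℤ) - 1 = ((p - j : ℕ) : ℤ) by
        push_cast; omega,
      Ring.choose_natCast, smul_eq_mul]
  have hvan := Ring.add_choose_eq (r := (N : ℤ)) (s := r) i (Commute.all _ _)
  rw [show (N : ℤ) + r = ((N - (p + 1) + i : ℕ) : ℤ) by push_cast [r]; omega,
    Ring.choose_natCast,
    Nat.sum_antidiagonal_eq_sum_range_succ fun a b ↦ Ring.choose (N : ℤ) a * Ring.choose r b]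
    at hvan
  rw [hvan, hNum]
  refine sum_congr rfl fun j hj ↦ ?_
  rw [hneg j (Nat.lt_succ_iff.mp (mem_range.mp hj)), Ring.choose_natCast, mul_comm]

lemma sum_choose_mul_hNum (p : ℕ) (f : ℕ → ℤ) {m : ℕ} (hmp : m ≤ p) :
    ∑ i ∈ range (m + 1), ((p - i).choose (p - m) : ℤ) * hNum p f i = f m := by
  simp_rw [hNum, mul_sum, range_eq_Ico]
  rw [← sum_Ico_Ico_comm (f := fun j i ↦ ((p - i).choose (p - m) : ℤ) *
    ((-1) ^ (i + j) * (p - j).choose (i - j) * f j))]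
  have hinner : ∀ j ∈ Ico 0 (m + 1), ∑ i ∈ Ico j (m + 1), ((p - i).choose (p - m) : ℤ) *
      ((-1) ^ (i + j) * (p - j).choose (i - j) * f j) = if j = m then f m else 0 := by
    intro j hj
    have hjm : j ≤ m := Nat.lt_succ_iff.mp (mem_Ico.mp hj).2
    rw [sum_Ico_eq_sum_range, show m + 1 - j = (m - j) + 1 by omega]
    have hterm : ∀ a ∈ range (m - j + 1), ((p - (j + a)).choose (p - m) : ℤ) *
        ((-1) ^ (j + a + j) * (p - j).choose (j + a - j) * f j) =
        (p - j).choose (p - m) * f j * ((-1) ^ a * (m - j).choose a) := by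
      intro a ha
      have hrev : ((p - (j + a)).choose (p - m) * (p - j).choose a : ℤ) =
          (p - j).choose (p - m) * (m - j).choose a := by
        have := choose_sub_mul_choose_sub (p := p) (i := j + a) (le_add_right le_rfl)
          (by have := mem_range.mp ha; omega) hmp
        rw [Nat.add_sub_cancel_left] at this
        exact_mod_cast this
      rw [Nat.add_sub_cancel_left,
        neg_one_pow_congr_mod_two (show (j + a + j) % 2 = a % 2 by omega)]
      linear_combination ((-1) ^ a * f j) * hrev
    rw [sum_congr rfl hterm, ← mul_sum, Int.alternating_sum_range_choose]
    obtain rfl | hlt := hjm.eq_or_lt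
    · simp
    · simp [Nat.sub_ne_zero_of_lt hlt, hlt.ne]
  rw [sum_congr rfl hinner, sum_ite_eq']
  simp

lemma hNum_sub_eq_hNum {p : ℕ} {f : ℕ → ℤ}
    (hrel : ∀ i, ∑ m ∈ range (p + 1), (-1) ^ (p + m) * (m.choose i : ℤ) * f m = f i)
    {i : ℕ} (hi : i ≤ p) : hNum p f (p - i) = hNum p f i := by
  calc hNum p f (p - i)
      = ∑ j ∈ range (p + 1), (-1) ^ (p + i + j) * ((p - j).choose i : ℤ) * f j := by
        refine sum_subset_zero_on_sdiff (range_subset_range.mpr (by omega)) ?_ ?_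
        · intro j hj
          rw [mem_sdiff, mem_range, mem_range] at hj
          rw [Nat.choose_eq_zero_of_lt (by omega)]
          simp
        · intro j hj
          have hj := mem_range.mp hj
          rw [neg_one_pow_congr_mod_two (show (p - i + j) % 2 = (p + i + j) % 2 by omega),
            Nat.choose_symm_of_eq_add (show p - j = (p - i - j) + i by omega)]
    _ = ∑ m ∈ range (p + 1), (-1) ^ (i + m) * f m *
          ∑ j ∈ range (p + 1), (-1) ^ j * (m.choose j : ℤ) * (p - j).choose i := by
        refine (sum_congr rfl fun j _ ↦ by rw [← hrel j, mul_sum]).trans ?_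
        rw [sum_comm]
        refine sum_congr rfl fun m _ ↦ ?_
        rw [mul_sum]
        refine sum_congr rfl fun j _ ↦ ?_
        have hsign : (-1 : ℤ) ^ (p + i + j) * (-1) ^ (p + m) = (-1) ^ (i + m) * (-1) ^ j := by
          rw [← pow_add, ← pow_add]
          exact neg_one_pow_congr_mod_two (by omega)
        linear_combination ((p - j).choose i * m.choose j * f m : ℤ) * hsign
    _ = ∑ m ∈ range (p + 1), (-1) ^ (i + m) * f m *
          if m ≤ i then ((p - m).choose (i - m) : ℤ) else 0 := by
        refine sum_congr rfl fun m hm ↦ ?_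
        have hmp := Nat.lt_succ_iff.mp (mem_range.mp hm)
        rw [← sum_neg_one_pow_mul_choose_mul_choose_sub hmp]
        congr 1
        refine (sum_subset (range_subset_range.mpr (by omega)) fun j _ hj ↦ ?_).symm
        rw [Nat.choose_eq_zero_of_lt (by simpa using hj)]
        simp
    _ = hNum p f i := by
        have hsub : range (i + 1) ⊆ range (p + 1) := range_subset_range.mpr (by omega)
        rw [hNum, ← sum_subset hsub fun m _ hm ↦ by rw [if_neg (by simpa using hm), mul_zero]]
        refine sum_congr rfl fun m hm ↦ ?_
        rw [if_pos (Nat.lt_succ_iff.mp (mem_range.mp hm))]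
        ring

namespace AbsComplex

variable {n : ℕ} (Δ : AbsComplex n)

def numFaces (m : ℕ) : ℕ := #{F ∈ Δ.faces | #F = m}

lemma fNum_eq_numFaces (i : ℕ) : Δ.fNum i = Δ.numFaces (i + 1) := rfl

lemma reducedEuler_linkFaces (F : Finset (Fin n)) :
    reducedEuler (Δ.linkFaces F) = ∑ H ∈ Δ.faces with F ⊆ H, (-1) ^ (#H + #F + 1) := by
  refine sum_nbij' (· ∪ F) (· \ F) ?_ ?_ ?_ ?_ ?_
  · intro G hG
    simp only [linkFaces, mem_filter] at hG ⊢
    exact ⟨hG.2.2, subset_union_right⟩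
  · intro H hH
    simp only [linkFaces, mem_filter, sdiff_union_of_subset (mem_filter.mp hH).2] at hH ⊢
    exact ⟨Δ.down_closed H hH.1 _ sdiff_subset, sdiff_inter_self _ _, hH.1⟩
  · intro G hG
    simp only [linkFaces, mem_filter] at hG
    exact union_sdiff_cancel_right (disjoint_iff_inter_eq_empty.mpr hG.2.1)
  · intro H hH
    exact sdiff_union_of_subset (mem_filter.mp hH).2
  · intro G hG
    simp only [linkFaces, mem_filter] at hG
    rw [card_union_of_disjoint (disjoint_iff_inter_eq_empty.mpr hG.2.1)]
    exact neg_one_pow_congr_mod_two (by omega)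

lemma sum_reducedEuler_linkFaces (i : ℕ) :
    ∑ F ∈ Δ.faces with #F = i, reducedEuler (Δ.linkFaces F) =
      ∑ H ∈ Δ.faces, (-1) ^ (#H + i + 1) * ((#H).choose i : ℤ) := by
  simp_rw [reducedEuler_linkFaces]
  rw [sum_comm' (t' := Δ.faces) (s' := fun H ↦ powersetCard i H)]
  · refine sum_congr rfl fun H _ ↦ ?_
    rw [sum_congr rfl fun F hF ↦ by rw [(mem_powersetCard.mp hF).2], sum_const, card_powersetCard,
      nsmul_eq_mul, mul_comm]
  · intro F H
    simp only [mem_filter, mem_powersetCard]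
    constructor
    · rintro ⟨⟨-, rfl⟩, hH, hFH⟩
      exact ⟨⟨hFH, rfl⟩, hH⟩
    · rintro ⟨⟨hFH, rfl⟩, hH⟩
      exact ⟨⟨Δ.down_closed H hH F hFH, rfl⟩, hH, hFH⟩

lemma sum_faces_eq_sum_numFaces {M : Type*} [AddCommMonoid M] {N : ℕ}
    (hcard : ∀ F ∈ Δ.faces, #F < N) (g : ℕ → M) :
    ∑ F ∈ Δ.faces, g #F = ∑ m ∈ range N, Δ.numFaces m • g m := by
  rw [← sum_fiberwise_of_maps_to (g := card) fun F hF ↦ mem_range.mpr (hcard F hF)]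
  refine sum_congr rfl fun m _ ↦ ?_
  rw [sum_congr rfl fun F hF ↦ by rw [(mem_filter.mp hF).2], sum_const, numFaces]

variable {Δ}

lemma IsEulerianDim.sum_neg_one_pow_mul_choose_mul_numFaces {D : ℕ} (hEul : Δ.IsEulerianDim D)
    (i : ℕ) :
    ∑ m ∈ range (D + 2), (-1) ^ (D + 1 + m) * (m.choose i : ℤ) * Δ.numFaces m =
      Δ.numFaces i := by
  have hsum := Δ.sum_reducedEuler_linkFaces i
  rw [sum_congr rfl fun F hF ↦ by rw [hEul.2.2 F (mem_filter.mp hF).1, (mem_filter.mp hF).2],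
    sum_const, Δ.sum_faces_eq_sum_numFaces (fun F hF ↦ Nat.lt_succ_of_le (hEul.1 F hF))
      fun m ↦ (-1) ^ (m + i + 1) * (m.choose i : ℤ)] at hsum
  calc ∑ m ∈ range (D + 2), (-1) ^ (D + 1 + m) * (m.choose i : ℤ) * Δ.numFaces m
      = (-1) ^ (D + i) *
          ∑ m ∈ range (D + 2), Δ.numFaces m • ((-1) ^ (m + i + 1) * (m.choose i : ℤ)) := by
        rw [mul_sum]
        refine sum_congr rfl fun m _ ↦ ?_
        rw [nsmul_eq_mul, neg_one_pow_congr_mod_two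
          (show (D + 1 + m) % 2 = (D + i + (m + i + 1)) % 2 by omega), pow_add]
        ring
    _ = Δ.numFaces i := by
        rw [← hsum, nsmul_eq_mul, mul_left_comm, ← pow_add, Even.neg_one_pow ⟨_, rfl⟩,
          mul_one]
        rfl

lemma Neighborly.numFaces_eq_choose {r m : ℕ} (hΔ : Δ.Neighborly r) (hrn : r ≤ n)
    (hmr : m ≤ r) : Δ.numFaces m = n.choose m := by
  have hfaces : {F ∈ Δ.faces | #F = m} = powersetCard m univ := by
    ext S
    simp only [mem_filter, mem_powersetCard_univ, and_iff_right_iff_imp]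
    intro hS
    obtain ⟨T, hST, -, hT⟩ := exists_subsuperset_card_eq (subset_univ S) (hS ▸ hmr)
      (by rwa [card_univ, Fintype.card_fin])
    exact Δ.down_closed T (hΔ T hT) S hST
  rw [numFaces, hfaces, card_powersetCard, card_univ, Fintype.card_fin]

end AbsComplex

/-- For `k ≥ 2` and a `(k−1)`-neighborly Eulerian complex `Δ` of dimension
`2k − 1` with `n ≥ 2k + 1` vertices,
`f_k(Δ) + k·(C(n,k) − f_{k−1}(Δ)) = Σ_{i=0}^{k} C(2k−i, k−1)·C(n−2k−1+i, i) + C(n−k−2, k−1)`. -/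
theorem statement2 {n k : ℕ} (hk : 2 ≤ k) (hn : 2 * k + 1 ≤ n) (Δ : AbsComplex n)
    (hEul : Δ.IsEulerianDim (2 * k - 1)) (hngh : Δ.Neighborly (k - 1)) :
    (Δ.fNum k : ℤ) + (k : ℤ) * ((n.choose k : ℤ) - (Δ.fNum (k - 1) : ℤ)) =
      (∑ i ∈ Finset.range (k + 1),
          ((2 * k - i).choose (k - 1) : ℤ) * ((n - (2 * k + 1) + i).choose i : ℤ)) +
        ((n - (k + 2)).choose (k - 1) : ℤ) := by
  set f : ℕ → ℤ := fun m ↦ Δ.numFaces m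
  have hrel : ∀ i,
      ∑ m ∈ range (2 * k + 1), (-1) ^ (2 * k + m) * (m.choose i : ℤ) * f m = f i := by
    intro i
    have h := hEul.sum_neg_one_pow_mul_choose_mul_numFaces i
    rwa [show 2 * k - 1 + 2 = 2 * k + 1 by omega, show 2 * k - 1 + 1 = 2 * k by omega] at h
  have hneighborly : ∀ j < k, f j = n.choose j := fun j hj ↦ by
    simp only [f, hngh.numFaces_eq_choose (by omega) (by omega : j ≤ k - 1)]
  have hexcess : ∀ i ≤ k,
      hNum (2 * k) f i - (n - (2 * k + 1) + i).choose i = f i - n.choose i := fun i hi ↦ by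
    rw [← hNum_choose (by omega) (by omega), hNum_sub_hNum fun j hj ↦ hneighborly j (by omega)]
  have hlow : ∀ i < k, hNum (2 * k) f i = (n - (2 * k + 1) + i).choose i := fun i hi ↦ by
    linarith [hexcess i hi.le, hneighborly i hi]
  have hsymm : hNum (2 * k) f (k + 1) = (n - (k + 2)).choose (k - 1) := by
    rw [← show 2 * k - (k - 1) = k + 1 by omega, hNum_sub_eq_hNum hrel (by omega),
      hlow _ (by omega), show n - (2 * k + 1) + (k - 1) = n - (k + 2) by omega]
  have hchoose : ((2 * k - k).choose (k - 1) : ℤ) = k := by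
    rw [show 2 * k - k = k by omega, Nat.choose_symm_of_eq_add (show k = (k - 1) + 1 by omega),
      Nat.choose_one_right]
  have hinv := sum_choose_mul_hNum (2 * k) f (m := k + 1) (by omega)
  rw [sum_range_succ, sum_range_succ, show 2 * k - (k + 1) = k - 1 by omega, hchoose,
    Nat.choose_self, hsymm, sum_congr rfl fun i hi ↦ by rw [hlow i (mem_range.mp hi)]] at hinv
  rw [sum_range_succ, hchoose, Δ.fNum_eq_numFaces, Δ.fNum_eq_numFaces,
    Nat.sub_add_cancel (by omega)]
  linear_combination (k : ℤ) * hexcess k le_rfl - hinv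
end

section
/- Let k ≥ 2 and let Δ be an Eulerian simplicial complex of dimension 2k with n ≥ 2k + 2 vertices that is (k−1)-neighborly. Then f_k(Δ) + (k+2)·(C(n, k) − f_{k−1}(Δ)) = Σ_{i=0}^{k} C(2k+1−i, k)·C(n−2k−2+i, i) + C(n−k−2, k). (The right-hand side equals the number of k-dimensional faces of the cyclic (2k+1)-polytope with n vertices, and C(n, k) − f_{k−1}(Δ) equals m_{k−1}(Δ), the number of missing faces of cardinality k.) -/
/-!
Write `f j` for the number of faces of cardinality `j` and `h` for the h-vector of `Δ`, with
`d = 2k + 1`. Summing the Eulerian link condition over all pairs of faces `F ⊆ H` gives the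
generalized Euler relations `∑_j (-1)^j C(j, s) f j = -f s`, and these force the
Dehn–Sommerville symmetry `h_i = h_{d-i}`; in particular `h_{k+1} = h_k`. Neighborliness gives
`f j = C(n, j)` for `j < k`, hence `h_i = C(n - d - 1 + i, i)` for `i < k` and
`h_k = C(n - k - 2, k) + f k - C(n, k)`. Expanding `f (k + 1) = ∑_i C(d - i, k) h_i` then yields
the formula, the missing faces entering through the correction term of `h_k`.
-/

open Finset Polynomial

lemma neg_one_pow_sub_eq_pow_add {a b : ℕ} (h : b ≤ a) :
    (-1 : ℤ) ^ (a - b) = (-1) ^ (a + b) := by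
  obtain ⟨c, rfl⟩ := Nat.exists_eq_add_of_le h
  rw [Nat.add_sub_cancel_left, show b + c + b = c + 2 * b by ring, pow_add, pow_mul]
  simp

/-- Compare the coefficients of `X ^ i` in `((X + 1) - 1) ^ l * (X + 1) ^ (d - l)`. -/
theorem sum_neg_one_pow_mul_choose_mul_choose_sub_s3 {l d i : ℕ} (hl : l ≤ d) (hi : i ≤ d) :
    ∑ j ∈ range (d + 1), (-1 : ℤ) ^ j * l.choose j * (d - j).choose i =
      (d - l).choose (d - i) := by
  have hpoly : ∑ j ∈ range (d + 1), C ((-1 : ℤ) ^ j * l.choose j) * (X + 1) ^ (d - j) =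
      X ^ l * (X + 1) ^ (d - l) := by
    rw [← sum_subset (range_subset_range.2 (by omega : l + 1 ≤ d + 1)) fun j _ hj => by
      rw [Nat.choose_eq_zero_of_lt (by simpa using hj)]; simp]
    calc _ = ∑ j ∈ range (l + 1), (-1) ^ j * (X + 1) ^ (l - j) * (l.choose j : ℤ[X]) *
          (X + 1) ^ (d - l) := by
          refine sum_congr rfl fun j hj => ?_
          rw [← Nat.sub_add_sub_cancel hl (by simpa [Nat.lt_succ_iff] using hj), pow_add]
          simp only [map_mul, map_pow, map_neg, map_one, map_natCast]
          ring
      _ = (-1 + (X + 1)) ^ l * (X + 1) ^ (d - l) := by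
          rw [add_pow (-1 : ℤ[X]) (X + 1), sum_mul]
      _ = X ^ l * (X + 1) ^ (d - l) := by ring
  have hcoeff := congrArg (coeff · i) hpoly
  simp only [finsetSum_coeff, coeff_C_mul, coeff_X_add_one_pow, coeff_X_pow_mul'] at hcoeff
  rw [hcoeff]
  split_ifs
  · rw [Nat.choose_symm_of_eq_add]; omega
  · rw [Nat.choose_eq_zero_of_lt (by omega)]; simp

/-- Compare the coefficients of `X ^ p` in `(1 - (X + 1)) ^ e`. -/
theorem sum_neg_one_pow_mul_choose_mul_choose {e d p : ℕ} (he : e ≤ d) :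
    ∑ x ∈ range (d + 1), (-1 : ℤ) ^ x * e.choose x * x.choose p =
      if p = e then (-1) ^ e else 0 := by
  have hpoly : ∑ x ∈ range (d + 1), C ((-1 : ℤ) ^ x * e.choose x) * (X + 1) ^ x =
      C ((-1 : ℤ) ^ e) * X ^ e := by
    rw [← sum_subset (range_subset_range.2 (by omega : e + 1 ≤ d + 1)) fun j _ hj => by
      rw [Nat.choose_eq_zero_of_lt (by simpa using hj)]; simp]
    calc _ = ∑ x ∈ range (e + 1), (-(X + 1)) ^ x * 1 ^ (e - x) * (e.choose x : ℤ[X]) := by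
          refine sum_congr rfl fun j _ => ?_
          rw [neg_pow (X + 1 : ℤ[X])]
          simp only [map_mul, map_pow, map_neg, map_one, map_natCast, one_pow]
          ring
      _ = C ((-1 : ℤ) ^ e) * X ^ e := by
          rw [← add_pow]
          simp only [map_pow, map_neg, map_one]
          ring
  have hcoeff := congrArg (coeff · p) hpoly
  simpa only [finsetSum_coeff, coeff_C_mul, coeff_X_add_one_pow, coeff_X_pow, mul_ite,
    mul_one, mul_zero] using hcoeff

/-- Here `f j` counts the faces of cardinality `j` of a `(d - 1)`-dimensional complex. The usual
coefficient `C(d - j, i - j)` is written as `C(d - j, d - i)`, so that the terms with `j > i`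
vanish instead of picking up the junk value `C(d - j, 0) = 1` of truncated subtraction. -/
def hVector (d : ℕ) (f : ℕ → ℤ) (i : ℕ) : ℤ :=
  ∑ j ∈ range (d + 1), (-1) ^ (i + j) * (d - j).choose (d - i) * f j

theorem sum_choose_mul_hVector (f : ℕ → ℤ) {d m : ℕ} (hm : m ≤ d) :
    ∑ i ∈ range (m + 1), ((d - i).choose (d - m) : ℤ) * hVector d f i = f m := by
  have inner : ∀ j ∈ range (d + 1), ∑ i ∈ range (d + 1),
      ((d - i).choose (d - m) : ℤ) * ((-1) ^ (i + j) * (d - j).choose (d - i) * f j) =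
        if j = m then f m else 0 := by
    intro j hj
    have hjd : j ≤ d := Nat.lt_succ_iff.1 (mem_range.1 hj)
    rw [← sum_range_reflect]
    calc _ = (-1) ^ (d + j) * f j *
          ∑ x ∈ range (d + 1), (-1) ^ x * ((d - j).choose x : ℤ) * x.choose (d - m) := by
          rw [mul_sum]
          refine sum_congr rfl fun x hx => ?_
          have hxd : x ≤ d := Nat.lt_succ_iff.1 (mem_range.1 hx)
          rw [add_tsub_cancel_right, Nat.sub_sub_self hxd, pow_add,
            neg_one_pow_sub_eq_pow_add hxd]
          ring
      _ = if j = m then f m else 0 := by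
          rw [sum_neg_one_pow_mul_choose_mul_choose (Nat.sub_le d j)]
          by_cases hjm : j = m
          · subst hjm
            rw [if_pos rfl, if_pos rfl, neg_one_pow_sub_eq_pow_add hjd]
            ring_nf
            simp
          · rw [if_neg (by omega), if_neg hjm, mul_zero]
  rw [sum_subset (range_subset_range.2 (by omega : m + 1 ≤ d + 1)) fun i hi hi' => by
    rw [Nat.choose_eq_zero_of_lt (by simp at hi hi'; omega)]; simp]
  simp only [hVector, mul_sum]
  rw [sum_comm, sum_congr rfl inner, sum_ite_eq', if_pos (mem_range.2 (by omega))]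

theorem hVector_sub_hVector {d i : ℕ} {f g : ℕ → ℤ} (hi : i ≤ d)
    (hfg : ∀ j < i, f j = g j) : hVector d f i - hVector d g i = f i - g i := by
  rw [hVector, hVector, ← sum_sub_distrib, sum_eq_single i]
  · rw [Nat.choose_self, ← two_mul, pow_mul]
    simp
  · intro j hj hji
    rcases Nat.lt_or_gt_of_ne hji with hlt | hgt
    · rw [hfg j hlt, sub_self]
    · rw [Nat.choose_eq_zero_of_lt (by simp at hj; omega)]
      ring
  · intro hi'
    exact absurd (mem_range.2 (by omega)) hi'

/-- Chu–Vandermonde with the negative upper index `-(d - i + 1)`, whose binomial coefficients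
are `(-1) ^ l * C(d - i + l, l)`. -/
theorem hVector_choose {d n i : ℕ} (hi : i ≤ d) (hd : d < n) :
    hVector d (fun j => (n.choose j : ℤ)) i = (n - (d + 1) + i).choose i := by
  have hvand := Ring.add_choose_eq i (Commute.all (n : ℤ) (-((d - i + 1 : ℕ) : ℤ)))
  rw [show (n : ℤ) + -((d - i + 1 : ℕ) : ℤ) = ((n - (d + 1) + i : ℕ) : ℤ) by
      push_cast [hd]; omega,
    Ring.choose_natCast, Nat.sum_antidiagonal_eq_sum_range_succ
      fun a b => Ring.choose (n : ℤ) a * Ring.choose (-((d - i + 1 : ℕ) : ℤ)) b] at hvand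
  rw [hvand, hVector, ← sum_subset (range_subset_range.2 (by omega : i + 1 ≤ d + 1))]
  · refine sum_congr rfl fun j hj => ?_
    have hji : j ≤ i := Nat.lt_succ_iff.1 (mem_range.1 hj)
    rw [Ring.choose_natCast, Ring.choose_neg, Units.smul_def, Int.coe_negOnePow_natCast,
      show ((d - i + 1 : ℕ) : ℤ) + (i - j : ℕ) - 1 = ((d - j : ℕ) : ℤ) by
        push_cast [Nat.cast_sub hi, Nat.cast_sub hji, Nat.cast_sub (hji.trans hi)]; ring,
      Ring.choose_natCast, neg_one_pow_sub_eq_pow_add hji,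
      Nat.choose_symm_of_eq_add (show d - j = d - i + (i - j) by omega)]
    ring
  · intro j hj hji
    rw [Nat.choose_eq_zero_of_lt (by simp at hj hji; omega)]
    simp

theorem hVector_eq_choose_add {d n i : ℕ} {f : ℕ → ℤ} (hi : i ≤ d) (hd : d < n)
    (hf : ∀ j < i, f j = n.choose j) :
    hVector d f i = (n - (d + 1) + i).choose i + (f i - n.choose i) := by
  rw [← hVector_choose hi hd, ← hVector_sub_hVector hi hf]
  ring

theorem hVector_symm {d i : ℕ} {f : ℕ → ℤ}
    (hf : ∀ s ≤ d, ∑ j ∈ range (d + 1), (-1) ^ j * j.choose s * f j = (-1) ^ d * f s)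
    (hi : i ≤ d) : hVector d f (d - i) = hVector d f i := by
  have hf' : ∀ j ∈ range (d + 1),
      f j = (-1) ^ d * ∑ l ∈ range (d + 1), (-1) ^ l * l.choose j * f l := by
    intro j hj
    rw [hf j (Nat.lt_succ_iff.1 (mem_range.1 hj)), ← mul_assoc, ← mul_pow]
    simp
  calc hVector d f (d - i)
      = ∑ j ∈ range (d + 1), ∑ l ∈ range (d + 1),
          (-1) ^ (i + l) * f l * ((-1) ^ j * l.choose j * (d - j).choose i) := by
        rw [hVector, Nat.sub_sub_self hi]
        refine sum_congr rfl fun j hj => ?_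
        rw [hf' j hj, mul_sum, mul_sum]
        refine sum_congr rfl fun l _ => ?_
        rw [pow_add (-1 : ℤ) (d - i), neg_one_pow_sub_eq_pow_add hi]
        ring_nf
        simp
    _ = ∑ l ∈ range (d + 1), (-1) ^ (i + l) * f l * (d - l).choose (d - i) := by
        rw [sum_comm]
        refine sum_congr rfl fun l hl => ?_
        rw [← mul_sum,
          sum_neg_one_pow_mul_choose_mul_choose_sub_s3 (Nat.lt_succ_iff.1 (mem_range.1 hl)) hi]
    _ = hVector d f i := sum_congr rfl fun l _ => by ring

namespace AbsComplex

variable {n : ℕ} (Δ : AbsComplex n)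

/-- Faces are counted by cardinality: `Δ.fNum i = Δ.faceCount (i + 1)`. -/
def faceCount (j : ℕ) : ℕ :=
  #(Δ.faces.filter fun F => F.card = j)

variable {Δ}

theorem IsEulerianDim.sum_neg_one_pow_card_superset {D : ℕ} (hΔ : Δ.IsEulerianDim D)
    {F : Finset (Fin n)} (hF : F ∈ Δ.faces) :
    ∑ H ∈ Δ.faces with F ⊆ H, (-1 : ℤ) ^ #H = (-1) ^ (D + 1) := by
  calc ∑ H ∈ Δ.faces with F ⊆ H, (-1 : ℤ) ^ #H
      = ∑ G ∈ Δ.linkFaces F, (-1) ^ (#G + #F) := by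
        refine sum_nbij' (· \ F) (· ∪ F) ?_ ?_ ?_ ?_ ?_
        · intro H hH
          obtain ⟨hH, hFH⟩ := mem_filter.1 hH
          rw [linkFaces, mem_filter, sdiff_union_of_subset hFH]
          exact ⟨Δ.down_closed H hH _ sdiff_subset, sdiff_inter_self F H, hH⟩
        · intro G hG
          exact mem_filter.2 ⟨(mem_filter.1 hG).2.2, subset_union_right⟩
        · intro H hH
          exact sdiff_union_of_subset (mem_filter.1 hH).2
        · intro G hG
          exact union_sdiff_cancel_right (disjoint_iff_inter_eq_empty.2 (mem_filter.1 hG).2.1)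
        · intro H hH
          rw [card_sdiff_add_card_eq_card (mem_filter.1 hH).2]
    _ = (-1) ^ (#F + 1) * reducedEuler (Δ.linkFaces F) := by
        rw [reducedEuler, mul_sum]
        exact sum_congr rfl fun G _ => by ring
    _ = (-1) ^ (D + 1) := by
        rw [hΔ.2.2 F hF]
        ring_nf
        simp

theorem IsEulerianDim.sum_neg_one_pow_mul_choose_mul_faceCount {D : ℕ}
    (hΔ : Δ.IsEulerianDim D) (s : ℕ) :
    ∑ j ∈ range (D + 2), (-1 : ℤ) ^ j * j.choose s * Δ.faceCount j =
      (-1) ^ (D + 1) * Δ.faceCount s := by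
  calc ∑ j ∈ range (D + 2), (-1 : ℤ) ^ j * j.choose s * Δ.faceCount j
      = ∑ H ∈ Δ.faces, (-1 : ℤ) ^ #H * (#H).choose s := by
        rw [← sum_fiberwise_of_maps_to (g := card)
          fun H hH => mem_range.2 (Nat.lt_succ_of_le (hΔ.1 H hH))]
        refine sum_congr rfl fun j _ => ?_
        rw [faceCount, sum_congr rfl fun H hH => by rw [(mem_filter.1 hH).2], sum_const,
          nsmul_eq_mul, mul_comm]
    _ = ∑ H ∈ Δ.faces, ∑ F ∈ H.powersetCard s, (-1 : ℤ) ^ #H := by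
        simp only [sum_const, card_powersetCard, nsmul_eq_mul, mul_comm]
    _ = ∑ F ∈ Δ.faces with #F = s, ∑ H ∈ Δ.faces with F ⊆ H, (-1 : ℤ) ^ #H := by
        refine sum_comm' fun H F => ?_
        simp only [mem_powersetCard, mem_filter]
        exact ⟨fun ⟨hH, hFH, hF⟩ => ⟨⟨hH, hFH⟩, Δ.down_closed H hH F hFH, hF⟩,
          fun ⟨⟨hH, hFH⟩, _, hF⟩ => ⟨hH, hFH, hF⟩⟩
    _ = (-1) ^ (D + 1) * Δ.faceCount s := by
        rw [sum_congr rfl fun F hF => hΔ.sum_neg_one_pow_card_superset (mem_filter.1 hF).1,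
          sum_const, faceCount, nsmul_eq_mul, mul_comm]

theorem Neighborly.faceCount_eq_choose {m j : ℕ} (hΔ : Δ.Neighborly m) (hm : m ≤ n)
    (hj : j ≤ m) : Δ.faceCount j = n.choose j := by
  have hfaces : Δ.faces.filter (fun F => F.card = j) = powersetCard j univ := by
    ext S
    simp only [mem_filter, mem_powersetCard, subset_univ, true_and]
    refine ⟨And.right, fun hS => ?_⟩
    obtain ⟨T, hST, hT⟩ := exists_superset_card_eq (s := S) (hS ▸ hj) (by simpa using hm)
    exact ⟨Δ.down_closed T (hΔ T hT) S hST, hS⟩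
  rw [faceCount, hfaces, card_powersetCard, card_univ, Fintype.card_fin]

end AbsComplex

/-- For `k ≥ 2` and a `(k−1)`-neighborly Eulerian complex `Δ` of dimension
`2k` with `n ≥ 2k + 2` vertices,
`f_k(Δ) + (k+2)·(C(n,k) − f_{k−1}(Δ)) = Σ_{i=0}^{k} C(2k+1−i, k)·C(n−2k−2+i, i) + C(n−k−2, k)`. -/
theorem statement3 {n k : ℕ} (hk : 2 ≤ k) (hn : 2 * k + 2 ≤ n) (Δ : AbsComplex n)
    (hEul : Δ.IsEulerianDim (2 * k)) (hngh : Δ.Neighborly (k - 1)) :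
    (Δ.fNum k : ℤ) + ((k : ℤ) + 2) * ((n.choose k : ℤ) - (Δ.fNum (k - 1) : ℤ)) =
      (∑ i ∈ Finset.range (k + 1),
          ((2 * k + 1 - i).choose k : ℤ) * ((n - (2 * k + 2) + i).choose i : ℤ)) +
        ((n - (k + 2)).choose k : ℤ) := by
  set f : ℕ → ℤ := fun j => Δ.faceCount j
  set h := hVector (2 * k + 1) f
  have hsymm : h (k + 1) = h k := by
    have := hVector_symm (i := k)
      (fun s _ => hEul.sum_neg_one_pow_mul_choose_mul_faceCount s) (by omega)
    rwa [show 2 * k + 1 - k = k + 1 by omega] at this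
  have hlow : ∀ j < k, f j = n.choose j := fun j hj => by
    simp only [f, hngh.faceCount_eq_choose (by omega) (by omega : j ≤ k - 1)]
  have hh : ∀ i ≤ k, h i = (n - (2 * k + 2) + i).choose i + (f i - n.choose i) :=
    fun i hi => hVector_eq_choose_add (by omega) (by omega) fun j hj => hlow j (by omega)
  have hsum : ∑ i ∈ range k, ((2 * k + 1 - i).choose k : ℤ) * h i =
      ∑ i ∈ range k, ((2 * k + 1 - i).choose k : ℤ) * (n - (2 * k + 2) + i).choose i :=
    sum_congr rfl fun i hi => by
      rw [hh i (by simp at hi; omega), hlow i (mem_range.1 hi), sub_self, add_zero]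
  have hhk := hh k le_rfl
  rw [show n - (2 * k + 2) + k = n - (k + 2) by omega] at hhk
  have hfNum : ∀ j, (Δ.fNum j : ℤ) = f (j + 1) := fun _ => rfl
  rw [hfNum, hfNum, Nat.sub_add_cancel (by omega : 1 ≤ k),
    ← sum_choose_mul_hVector f (by omega : k + 1 ≤ 2 * k + 1), sum_range_succ, sum_range_succ,
    sum_range_succ, show 2 * k + 1 - (k + 1) = k by omega, show 2 * k + 1 - k = k + 1 by omega,
    show n - (2 * k + 2) + k = n - (k + 2) by omega, Nat.choose_self,
    Nat.choose_succ_self_right]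
  push_cast
  linear_combination hsum + hsymm + ((k : ℤ) + 2) * hhk
end

section
/- Let k ≥ 2 and let Δ be an Eulerian simplicial complex of dimension 2k with n ≥ 2k + 2 vertices that is (k−1)-neighborly. Then m_k(Δ) ≥ k²·f_{k−1}(Δ)²/((k+1)·C(n, k−1)) − (n·(k−1) − k·(k−2))·f_{k−1}(Δ)/(k+1) − [Σ_{i=0}^{k} C(2k+1−i, k)·C(n−2k−2+i, i) + C(n−k−2, k)] + (k+2)·(C(n, k) − f_{k−1}(Δ)), where the bracketed sum equals the number of k-dimensional faces of the cyclic (2k+1)-polytope with n vertices. -/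
section BinomialLemmas
open Finset

/-- Hockey stick: `∑_{j≤B} C(s+j, j) = C(s+B+1, B)`. -/
lemma hockey (s : ℕ) : ∀ B : ℕ, ∑ j ∈ range (B+1), (s+j).choose j = (s+B+1).choose B := by
  intro B
  induction B with
  | zero => simp
  | succ B ih =>
      rw [Finset.sum_range_succ, ih,
        show s+(B+1)+1 = (s+B+1)+1 from rfl, Nat.choose_succ_succ,
        show s+(B+1) = s+B+1 from rfl]

/-- Vandermonde in the upper index:
`∑_{i≤B} C(r+i,i) C(s+(B−i), B−i) = C(r+s+B+1, B)`. -/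
lemma vand_upper (s : ℕ) : ∀ B r : ℕ,
    ∑ i ∈ range (B+1), (r+i).choose i * ((s + (B - i)).choose (B - i))
      = (r+s+B+1).choose B := by
  intro B
  induction B with
  | zero => intro r; simp
  | succ B ih =>
      intro r
      induction r with
      | zero =>
          have h1 : ∑ i ∈ range (B+1+1), (0+i).choose i * ((s + (B+1 - i)).choose (B+1 - i))
              = ∑ i ∈ range (B+1+1), (s + (B+1 - i)).choose (B+1 - i) := by
            refine Finset.sum_congr rfl fun i _ => ?_
            simp
          rw [h1]
          have h2 := Finset.sum_range_reflect (fun j => (s+j).choose j) (B+2)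
          simp only [show B+2-1 = B+1 from rfl] at h2
          rw [show B+1+1 = B+2 from rfl, h2, hockey s (B+1), show 0+s+(B+1)+1 = s+(B+1)+1 by ring]
      | succ r ihr =>
          rw [Finset.sum_range_succ']
          have h3 : ∀ i ∈ range (B+1),
              (r+1+(i+1)).choose (i+1) * ((s + (B+1 - (i+1))).choose (B+1 - (i+1)))
              = (r+i+1).choose i * ((s + (B - i)).choose (B - i))
                + (r+i+1).choose (i+1) * ((s + (B+1 - (i+1))).choose (B+1 - (i+1))) := by
            intro i _
            rw [show r+1+(i+1) = (r+i+1)+1 by ring, Nat.choose_succ_succ,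
              Nat.succ_sub_succ, add_mul]
          rw [Finset.sum_congr rfl h3, Finset.sum_add_distrib]
          have e1 : ∑ i ∈ range (B+1), (r+i+1).choose i * ((s + (B - i)).choose (B - i))
              = (r+1+s+B+1).choose B := by
            rw [← ih (r+1)]
            exact Finset.sum_congr rfl fun i _ => by rw [show r+i+1 = r+1+i by ring]
          have e2 : (∑ i ∈ range (B+1),
                (r+i+1).choose (i+1) * ((s + (B+1 - (i+1))).choose (B+1 - (i+1))))
                + (r+1+0).choose 0 * ((s + (B+1 - 0)).choose (B+1 - 0))
              = (r+s+(B+1)+1).choose (B+1) := by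
            rw [← ihr, Finset.sum_range_succ'
              (fun i => (r+i).choose i * ((s + (B+1 - i)).choose (B+1 - i))) (B+1)]
            congr 1
            · simp
          rw [add_assoc, add_comm (∑ i ∈ range (B+1),
                (r+i+1).choose i * ((s + (B - i)).choose (B - i)))]
          rw [← add_assoc, e2, e1]
          rw [show r+s+(B+1)+1 = (r+s+B+2) from by ring,
            show r+1+s+B+1 = r+s+B+2 from by ring,
            Nat.choose_succ_succ (r+s+B+2) B]
          exact add_comm _ _


/-- `∑_{j≤K} (−1)^j C(a−j, K−j) C(m, j) = C(a−m, K)` for `m ≤ a`. -/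
lemma altG2 : ∀ m : ℕ, ∀ a K : ℕ, m ≤ a →
    ∑ j ∈ range (K+1), (-1 : ℤ)^j * ((a-j).choose (K-j)) * (m.choose j)
      = ((a-m).choose K : ℤ) := by
  intro m
  induction m with
  | zero =>
      intro a K _
      rw [Finset.sum_eq_single_of_mem 0 (Finset.mem_range.mpr (Nat.succ_pos K))]
      · simp
      · intro j _ hj
        rcases Nat.exists_eq_succ_of_ne_zero hj with ⟨j', rfl⟩
        simp
  | succ m ihm =>
      intro a K hma
      rcases K with _ | K'
      · rw [Finset.sum_range_one]; simp
      · rw [Finset.sum_range_succ']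
        have h1 : ∀ j ∈ range (K'+1),
            (-1 : ℤ)^(j+1) * ((a-(j+1)).choose (K'+1-(j+1))) * ((m+1).choose (j+1))
            = (-(-1 : ℤ)^j * ((a-1-j).choose (K'-j)) * (m.choose j))
              + (-(-1 : ℤ)^j * ((a-1-j).choose (K'-j)) * (m.choose (j+1))) := by
          intro j _
          rw [show a-(j+1) = a-1-j by omega, show K'+1-(j+1) = K'-j by omega,
            Nat.choose_succ_succ m j, Nat.succ_eq_add_one]
          push_cast
          ring
        rw [Finset.sum_congr rfl h1, Finset.sum_add_distrib]
        have hma' : m ≤ a - 1 := by omega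
        have e1 : ∑ j ∈ range (K'+1),
            (-(-1 : ℤ)^j * ((a-1-j).choose (K'-j)) * (m.choose j))
            = -(((a-1-m).choose K' : ℤ)) := by
          rw [← ihm (a-1) K' hma', ← Finset.sum_neg_distrib]
          exact Finset.sum_congr rfl fun j _ => by ring
        have e2 : (∑ j ∈ range (K'+1),
            (-(-1 : ℤ)^j * ((a-1-j).choose (K'-j)) * (m.choose (j+1))))
              + (-1 : ℤ)^0 * ((a-0).choose (K'+1-0)) * ((m+1).choose 0)
            = ((a-m).choose (K'+1) : ℤ) := by
          have hs := Finset.sum_range_succ'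
            (fun j => (-1 : ℤ)^j * (((a-j).choose (K'+1-j) : ℕ) : ℤ) * ((m.choose j : ℕ) : ℤ)) (K'+1)
          have hsum : ∑ j ∈ range (K'+1),
              (-(-1 : ℤ)^j * ((a-1-j).choose (K'-j)) * (m.choose (j+1)))
              = ∑ j ∈ range (K'+1),
                (-1 : ℤ)^(j+1) * (((a-(j+1)).choose (K'+1-(j+1)) : ℕ) : ℤ) * ((m.choose (j+1) : ℕ) : ℤ) := by
            refine Finset.sum_congr rfl fun j _ => ?_
            rw [show a-(j+1) = a-1-j by omega, show K'+1-(j+1) = K'-j by omega]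
            ring
          have h0 : ((-1 : ℤ)^0 * ((a-0).choose (K'+1-0)) * ((m+1).choose 0) : ℤ)
              = (-1 : ℤ)^0 * (((a-0).choose (K'+1-0) : ℕ) : ℤ) * ((m.choose 0 : ℕ) : ℤ) := by simp
          rw [hsum, h0, ← hs, ihm a (K'+1) (by omega)]
        have hpas : ((a-m).choose (K'+1) : ℤ)
            = ((a-1-m).choose K' : ℤ) + ((a-1-m).choose (K'+1) : ℤ) := by
          rw [show a-m = (a-1-m)+1 by omega, Nat.choose_succ_succ]
          push_cast; ring
        rw [show a-(m+1) = a-1-m by omega]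
        linarith [e1, e2, hpas]

/-- `∑_{j≤K} (−1)^j C(a−j, K−j) C(n, j) = (−1)^K C(n−a+K−1, K)` for `K ≤ a ≤ n`. -/
lemma altG3 : ∀ K a n : ℕ, K ≤ a → a ≤ n →
    ∑ j ∈ range (K+1), (-1 : ℤ)^j * ((a-j).choose (K-j)) * (n.choose j)
      = (-1 : ℤ)^K * ((n-a+K-1).choose K : ℤ) := by
  intro K
  induction K with
  | zero => intro a n _ _; simp
  | succ K ih =>
      intro a n hKa han
      induction n, han using Nat.le_induction with
      | base =>
          rw [altG2 a a (K+1) le_rfl]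
          rw [Nat.sub_self]
          rw [Nat.choose_eq_zero_of_lt (by omega), show 0+(K+1)-1 = K by omega,
            Nat.choose_eq_zero_of_lt (by omega)]
          simp
      | succ n hn ihn =>
          rw [Finset.sum_range_succ']
          have h1 : ∀ j ∈ range (K+1),
              (-1 : ℤ)^(j+1) * ((a-(j+1)).choose (K+1-(j+1))) * ((n+1).choose (j+1))
              = (-(-1 : ℤ)^j * ((a-1-j).choose (K-j)) * (n.choose j))
                + ((-1 : ℤ)^(j+1) * ((a-(j+1)).choose (K+1-(j+1))) * (n.choose (j+1))) := by
            intro j _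
            rw [Nat.choose_succ_succ n j, Nat.succ_eq_add_one]
            rw [show a-(j+1) = a-1-j by omega, show K+1-(j+1) = K-j by omega]
            push_cast
            ring
          rw [Finset.sum_congr rfl h1, Finset.sum_add_distrib]
          have e1 : ∑ j ∈ range (K+1),
              (-(-1 : ℤ)^j * ((a-1-j).choose (K-j)) * (n.choose j))
              = -((-1 : ℤ)^K * ((n-a+K).choose K : ℤ)) := by
            have := ih (a-1) n (by omega) (by omega)
            rw [show n-(a-1)+K-1 = n-a+K by omega] at this
            rw [← this, ← Finset.sum_neg_distrib]
            exact Finset.sum_congr rfl fun j _ => by ring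
          have e2 : (∑ j ∈ range (K+1),
              ((-1 : ℤ)^(j+1) * ((a-(j+1)).choose (K+1-(j+1))) * (n.choose (j+1))))
                + (-1 : ℤ)^0 * ((a-0).choose (K+1-0)) * ((n+1).choose 0)
              = (-1 : ℤ)^K.succ * ((n-a+K).choose (K+1) : ℤ) := by
            have hs := Finset.sum_range_succ'
              (fun j => (-1 : ℤ)^j * (((a-j).choose (K+1-j) : ℕ) : ℤ) * ((n.choose j : ℕ) : ℤ)) (K+1)
            have h0 : ((-1 : ℤ)^0 * ((a-0).choose (K+1-0)) * ((n+1).choose 0) : ℤ)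
                = (-1 : ℤ)^0 * (((a-0).choose (K+1-0) : ℕ) : ℤ) * ((n.choose 0 : ℕ) : ℤ) := by simp
            rw [h0, ← hs, ihn]
            rw [show n-a+(K+1)-1 = n-a+K by omega]
          have hpas : ((n+1-a+(K+1)-1).choose (K+1) : ℤ)
              = ((n-a+K).choose K : ℤ) + ((n-a+K).choose (K+1) : ℤ) := by
            rw [show n+1-a+(K+1)-1 = (n-a+K)+1 by omega, Nat.choose_succ_succ]
            push_cast; ring
          have hr : (-1 : ℤ)^(K+1) * ((n+1-a+(K+1)-1).choose (K+1) : ℤ)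
              = (-1 : ℤ)^K.succ * ((n-a+K).choose (K+1) : ℤ)
                + (-((-1 : ℤ)^K * ((n-a+K).choose K : ℤ))) := by
            rw [hpas, Nat.succ_eq_add_one]; ring
          rw [hr]
          linarith [e1, e2]

/-- The number of `k`-faces of the cyclic `(2k+1)`-polytope:
`∑_{i≤k} C(2k+1−i,k) C(n−2k−2+i, i) + C(n−k−2,k) + C(n−k−2,k+1) = C(n,k+1)`. -/
lemma Pcyc {n k : ℕ} (hk : 1 ≤ k) (hn : 2*k+2 ≤ n) :
    (∑ i ∈ range (k+1), (2*k+1-i).choose k * ((n-(2*k+2)+i).choose i))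
      + ((n-(k+2)).choose k + (n-(k+2)).choose (k+1)) = n.choose (k+1) := by
  have hv := vand_upper k (k+1) (n-(2*k+2))
  rw [show n-(2*k+2)+k+(k+1)+1 = n by omega] at hv
  rw [Finset.sum_range_succ] at hv
  have hcong : ∀ i ∈ range (k+1),
      (n-(2*k+2)+i).choose i * ((k + (k+1 - i)).choose (k+1 - i))
      = (2*k+1-i).choose k * ((n-(2*k+2)+i).choose i) := by
    intro i hi
    rw [Finset.mem_range] at hi
    rw [show k + (k+1-i) = 2*k+1-i by omega,
      Nat.choose_symm_of_eq_add (by omega : 2*k+1-i = (k+1-i) + k), mul_comm]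
  rw [Finset.sum_congr rfl hcong] at hv
  rw [Nat.sub_self, Nat.add_zero, Nat.choose_zero_right, Nat.mul_one] at hv
  rw [show n-(2*k+2)+(k+1) = n-(k+1) by omega] at hv
  have hpas : (n-(k+1)).choose (k+1) = (n-(k+2)).choose k + (n-(k+2)).choose (k+1) := by
    rw [show n-(k+1) = (n-(k+2))+1 by omega, Nat.choose_succ_succ]
  omega

end BinomialLemmas

namespace AbsComplex
open Finset
variable {n : ℕ}

/-- Summed link conditions: for every `j`,
`∑_{H ∈ Δ} (−1)^{|H|} C(|H|, j) = −#{faces of cardinality j}`. -/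
lemma euler_rel (Δ : AbsComplex n) {D : ℕ} (hEul : Δ.IsEulerianDim D) (hD : Even D)
    (j : ℕ) :
    ∑ H ∈ Δ.faces, (-1 : ℤ)^H.card * (H.card.choose j)
      = -(((Δ.faces.filter fun H => H.card = j).card : ℤ)) := by
  classical
  set S := Δ.faces.filter (fun F => F.card = j) with hS
  have hsum : ∑ F ∈ S, ((-1 : ℤ)^j * reducedEuler (Δ.linkFaces F)) = (S.card : ℤ) := by
    rw [Finset.sum_congr rfl (fun F hF => ?_), Finset.sum_const, nsmul_eq_mul, mul_one]
    have hFf : F ∈ Δ.faces := (Finset.mem_filter.mp hF).1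
    have hFc : F.card = j := (Finset.mem_filter.mp hF).2
    rw [hEul.2.2 F hFf, hFc, ← pow_add]
    exact Even.neg_one_pow (by rcases hD with ⟨r, hr⟩; exact ⟨j + r, by omega⟩)
  have hexp : ∀ F ∈ S, (-1 : ℤ)^j * reducedEuler (Δ.linkFaces F)
      = ∑ G ∈ Δ.linkFaces F, -((-1 : ℤ)^(F.card + G.card)) := by
    intro F hF
    have hFc : F.card = j := (Finset.mem_filter.mp hF).2
    rw [reducedEuler, Finset.mul_sum]
    refine Finset.sum_congr rfl fun G _ => ?_
    rw [hFc, pow_add, pow_add]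
    ring
  rw [Finset.sum_congr rfl hexp, Finset.sum_sigma'] at hsum
  -- reindex pairs (F, G) ↦ (H = G ∪ F, F)
  have hbij : ∑ p ∈ S.sigma (fun F => Δ.linkFaces F), -((-1 : ℤ)^(p.1.card + p.2.card))
      = ∑ q ∈ Δ.faces.sigma (fun H => H.powersetCard j), -((-1 : ℤ)^(q.1.card)) := by
    refine Finset.sum_nbij' (fun p => ⟨p.2 ∪ p.1, p.1⟩) (fun q => ⟨q.2, q.1 \ q.2⟩)
      ?_ ?_ ?_ ?_ ?_
    · rintro ⟨F, G⟩ hp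
      rw [Finset.mem_sigma] at hp
      obtain ⟨hF, hG⟩ := hp
      have hG' := Finset.mem_filter.mp hG
      rw [Finset.mem_sigma]
      exact ⟨hG'.2.2, Finset.mem_powersetCard.mpr
        ⟨Finset.subset_union_right, (Finset.mem_filter.mp hF).2⟩⟩
    · rintro ⟨H, F⟩ hq
      rw [Finset.mem_sigma] at hq
      obtain ⟨hH, hF⟩ := hq
      obtain ⟨hFH, hFc⟩ := Finset.mem_powersetCard.mp hF
      rw [Finset.mem_sigma]
      constructor
      · exact Finset.mem_filter.mpr ⟨Δ.down_closed H hH F hFH, hFc⟩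
      · refine Finset.mem_filter.mpr ⟨Δ.down_closed H hH _ (Finset.sdiff_subset), ?_, ?_⟩
        · exact Finset.sdiff_inter_self _ _
        · rw [Finset.sdiff_union_of_subset hFH]; exact hH
    · rintro ⟨F, G⟩ hp
      rw [Finset.mem_sigma] at hp
      obtain ⟨hF, hG⟩ := hp
      have hG' := Finset.mem_filter.mp hG
      have hdisj : Disjoint G F := Finset.disjoint_iff_inter_eq_empty.mpr hG'.2.1
      have : (G ∪ F) \ F = G := by
        rw [Finset.union_sdiff_right, Finset.sdiff_eq_self_of_disjoint hdisj]
      simp [this]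
    · rintro ⟨H, F⟩ hq
      rw [Finset.mem_sigma] at hq
      obtain ⟨hH, hF⟩ := hq
      obtain ⟨hFH, hFc⟩ := Finset.mem_powersetCard.mp hF
      simp [Finset.sdiff_union_of_subset hFH]
    · rintro ⟨F, G⟩ hp
      rw [Finset.mem_sigma] at hp
      obtain ⟨hF, hG⟩ := hp
      have hG' := Finset.mem_filter.mp hG
      have hdisj : Disjoint G F := Finset.disjoint_iff_inter_eq_empty.mpr hG'.2.1
      have hcard : (G ∪ F).card = G.card + F.card := Finset.card_union_of_disjoint hdisj
      simp only [hcard]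
      rw [add_comm F.card G.card]
  rw [hbij] at hsum
  rw [Finset.sum_sigma] at hsum
  have hinner : ∀ H ∈ Δ.faces,
      ∑ _F ∈ H.powersetCard j, -((-1 : ℤ)^(H.card)) = -((H.card.choose j : ℤ) * (-1)^H.card) := by
    intro H _
    rw [Finset.sum_const, Finset.card_powersetCard, nsmul_eq_mul]
    ring
  rw [Finset.sum_congr rfl hinner] at hsum
  have hneg : ∑ H ∈ Δ.faces, (-1 : ℤ)^H.card * (H.card.choose j)
      = -∑ H ∈ Δ.faces, -((H.card.choose j : ℤ) * (-1)^H.card) := by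
    rw [← Finset.sum_neg_distrib]
    exact Finset.sum_congr rfl fun H _ => by ring
  rw [hneg, hsum]


/-- number of faces of cardinality `j` -/
def nF (Δ : AbsComplex n) (j : ℕ) : ℕ := (Δ.faces.filter fun H => H.card = j).card

/-- Grouping a sum over faces by cardinality. -/
lemma sum_faces_by_card (Δ : AbsComplex n) {d : ℕ} (hd : ∀ H ∈ Δ.faces, H.card ≤ d)
    (φ : ℕ → ℤ) :
    ∑ H ∈ Δ.faces, φ H.card = ∑ m ∈ range (d+1), (Δ.nF m : ℤ) * φ m := by
  classical
  rw [← Finset.sum_fiberwise_of_maps_to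
    (fun H hH => Finset.mem_range.mpr (Nat.lt_succ_of_le (hd H hH)))
    (fun H => φ H.card)]
  refine Finset.sum_congr rfl fun m _ => ?_
  have : ∀ H ∈ Δ.faces.filter (fun H => H.card = m), φ H.card = φ m := by
    intro H hH; rw [(Finset.mem_filter.mp hH).2]
  rw [Finset.sum_congr rfl this, Finset.sum_const, nsmul_eq_mul, nF]

/-- Neighborliness: all faces of cardinality `≤ k−1` are present. -/
lemma nF_eq_choose (Δ : AbsComplex n) {k : ℕ} (hk : 1 ≤ k) (hkn : k - 1 ≤ n)
    (hngh : Δ.Neighborly (k-1)) {m : ℕ} (hm : m ≤ k-1) :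
    Δ.nF m = n.choose m := by
  classical
  have : Δ.faces.filter (fun H => H.card = m) = Finset.powersetCard m Finset.univ := by
    ext H
    rw [Finset.mem_filter, Finset.mem_powersetCard_univ]
    constructor
    · exact fun h => h.2
    · intro hc
      refine ⟨?_, hc⟩
      obtain ⟨S, hHS, hScard⟩ := Finset.exists_superset_card_eq
        (by omega : H.card ≤ k-1) (by simpa using hkn)
      exact Δ.down_closed S (hngh S hScard) H hHS
  rw [nF, this, Finset.card_powersetCard, Finset.card_univ, Fintype.card_fin]

/-- The key relation extracted from the Dehn–Sommerville system:
`F_{k+1} + (k+2)(C(n,k) − F_k) = C(n,k+1) − C(n−k−2, k+1)`. -/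
lemma key_frel (Δ : AbsComplex n) {k : ℕ} (hk : 2 ≤ k) (hn : 2*k+2 ≤ n)
    (hEul : Δ.IsEulerianDim (2*k)) (hngh : Δ.Neighborly (k-1)) :
    (Δ.nF (k+1) : ℤ) + (k+2) * ((n.choose k : ℤ) - (Δ.nF k : ℤ))
      = (n.choose (k+1) : ℤ) - ((n-(k+2)).choose (k+1) : ℤ) := by
  classical
  have hd : ∀ H ∈ Δ.faces, H.card ≤ 2*k+1 := hEul.1
  -- step 1: the combined relation
  have hcomb : ∑ H ∈ Δ.faces, (-1 : ℤ)^H.card * ((2*k+1-H.card).choose k)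
      = -∑ j ∈ range (k+1), (-1 : ℤ)^j * ((2*k+1-j).choose (k-j)) * (Δ.nF j : ℤ) := by
    have hper : ∀ H ∈ Δ.faces, (-1 : ℤ)^H.card * ((2*k+1-H.card).choose k)
        = ∑ j ∈ range (k+1),
            (-1 : ℤ)^j * ((2*k+1-j).choose (k-j)) * ((-1 : ℤ)^H.card * (H.card.choose j)) := by
      intro H hH
      rw [← altG2 H.card (2*k+1) k (hd H hH), Finset.mul_sum]
      exact Finset.sum_congr rfl fun j _ => by ring
    rw [Finset.sum_congr rfl hper, Finset.sum_comm]
    rw [← Finset.sum_neg_distrib]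
    refine Finset.sum_congr rfl fun j _ => ?_
    rw [← Finset.mul_sum, euler_rel Δ hEul ⟨k, by ring⟩ j, nF]
    ring
  -- step 2: group LHS by cardinality and truncate
  rw [sum_faces_by_card Δ hd (fun m => (-1 : ℤ)^m * ((2*k+1-m).choose k))] at hcomb
  have htrunc : ∑ m ∈ range (2*k+1+1), (Δ.nF m : ℤ) * ((-1 : ℤ)^m * ((2*k+1-m).choose k))
      = ∑ m ∈ range (k+2), (Δ.nF m : ℤ) * ((-1 : ℤ)^m * ((2*k+1-m).choose k)) := by
    symm
    refine Finset.sum_subset (Finset.range_subset_range.mpr (by omega)) ?_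
    intro m _ hm
    rw [Finset.mem_range, not_lt] at hm
    rw [Nat.choose_eq_zero_of_lt (by omega : 2*k+1-m < k)]
    simp
  rw [htrunc, Finset.sum_range_succ] at hcomb
  -- step 3: merge per-m coefficients via Pascal
  have hmerge : ∀ m ∈ range (k+1),
      (Δ.nF m : ℤ) * ((-1 : ℤ)^m * ((2*k+1-m).choose k))
        + (-1 : ℤ)^m * ((2*k+1-m).choose (k-m)) * (Δ.nF m : ℤ)
      = (-1 : ℤ)^m * ((2*k+2-m).choose (k+1)) * (Δ.nF m : ℤ) := by
    intro m hm
    rw [Finset.mem_range] at hm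
    have hsymm : (2*k+1-m).choose (k-m) = (2*k+1-m).choose (k+1) :=
      Nat.choose_symm_of_eq_add (by omega)
    have hpas : (2*k+2-m).choose (k+1) = (2*k+1-m).choose k + (2*k+1-m).choose (k+1) := by
      rw [show 2*k+2-m = (2*k+1-m)+1 by omega, Nat.choose_succ_succ]
    rw [hsymm, hpas]
    push_cast
    ring
  -- assemble: (−1)^{k+1} F_{k+1} + ∑_{m≤k} (−1)^m C(2k+2−m,k+1) F_m = 0
  have hstar : (Δ.nF (k+1) : ℤ) * ((-1 : ℤ)^(k+1) * (((2*k+1-(k+1)).choose k : ℕ) : ℤ))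
      + ∑ m ∈ range (k+1), (-1 : ℤ)^m * ((2*k+2-m).choose (k+1)) * (Δ.nF m : ℤ) = 0 := by
    have hsplit : ∑ m ∈ range (k+1), (-1 : ℤ)^m * ((2*k+2-m).choose (k+1)) * (Δ.nF m : ℤ)
        = (∑ m ∈ range (k+1), (Δ.nF m : ℤ) * ((-1 : ℤ)^m * ((2*k+1-m).choose k)))
          + ∑ m ∈ range (k+1), (-1 : ℤ)^m * ((2*k+1-m).choose (k-m)) * (Δ.nF m : ℤ) := by
      rw [← Finset.sum_add_distrib]
      exact (Finset.sum_congr rfl hmerge).symm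
    rw [hsplit]
    linarith [hcomb]
  -- simplify the C(k,k) coefficient
  rw [show 2*k+1-(k+1) = k by omega, Nat.choose_self] at hstar
  -- step 4: split off the m = k term and substitute neighborliness values
  rw [Finset.sum_range_succ] at hstar
  have hsub : ∑ m ∈ range k, (-1 : ℤ)^m * ((2*k+2-m).choose (k+1)) * (Δ.nF m : ℤ)
      = ∑ m ∈ range k, (-1 : ℤ)^m * ((2*k+2-m).choose (k+1)) * ((n.choose m : ℕ) : ℤ) := by
    refine Finset.sum_congr rfl fun m hm => ?_
    rw [Finset.mem_range] at hm
    rw [nF_eq_choose Δ (by omega) (by omega) hngh (by omega : m ≤ k-1)]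
  rw [hsub] at hstar
  -- step 5: evaluate the alternating binomial sum via altG3
  have hg3 := altG3 (k+1) (2*k+2) n (by omega) (by omega)
  have hsymmall : ∀ m ∈ range (k+2),
      (-1 : ℤ)^m * (((2*k+2-m).choose (k+1-m) : ℕ) : ℤ) * ((n.choose m : ℕ) : ℤ)
      = (-1 : ℤ)^m * (((2*k+2-m).choose (k+1) : ℕ) : ℤ) * ((n.choose m : ℕ) : ℤ) := by
    intro m hm
    rw [Finset.mem_range] at hm
    rw [Nat.choose_symm_of_eq_add (by omega : 2*k+2-m = (k+1) + (k+1-m))]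
  rw [Finset.sum_congr rfl hsymmall] at hg3
  rw [show n-(2*k+2)+(k+1)-1 = n-(k+2) by omega] at hg3
  rw [Finset.sum_range_succ, Finset.sum_range_succ] at hg3
  rw [show 2*k+2-(k+1) = k+1 by omega, Nat.choose_self] at hg3
  rw [show 2*k+2-k = k+2 by omega] at hg3 hstar
  have hkk : ((k+2).choose (k+1) : ℤ) = (k : ℤ) + 2 := by
    rw [show k+2 = (k+1)+1 by omega, Nat.choose_succ_self_right]
    push_cast; ring
  rw [hkk] at hstar hg3
  -- step 6: conclude
  have hsq : (-1 : ℤ)^k * (-1 : ℤ)^k = 1 := by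
    rw [← pow_add]; exact Even.neg_one_pow ⟨k, by omega⟩
  have hsucc : (-1 : ℤ)^(k+1) = -((-1 : ℤ)^k) := by rw [pow_succ]; ring
  rw [hsucc] at hstar hg3
  linear_combination (-((-1 : ℤ)^k)) * hstar + ((-1 : ℤ)^k) * hg3
    + (-((Δ.nF (k+1) : ℤ) + ((k : ℤ)+2) * ((n.choose k : ℕ) : ℤ)
        - ((k : ℤ)+2) * (Δ.nF k : ℤ) - ((n.choose (k+1) : ℕ) : ℤ)
        + (((n-(k+2)).choose (k+1) : ℕ) : ℤ))) * hsq


open scoped Classical in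
/-- The counting part: there are numbers `X` (count of (k+1)-subsets that are neither faces
nor missing faces), `PP` (ordered pairs of distinct non-face `k`-subsets with union of
cardinality `k+1`) and `g` (non-face `k`-subsets) with the listed properties. -/
lemma count_main (Δ : AbsComplex n) {k : ℕ} (hk : 2 ≤ k) (hn : 2*k+2 ≤ n)
    (hngh : Δ.Neighborly (k-1)) :
    ∃ X PP g : ℕ,
      (Δ.mNum k + Δ.nF (k+1) + X = n.choose (k+1)) ∧
      (Δ.nF k + g = n.choose k) ∧
      ((k+1) * X + (PP + (n-k)*g) ≤ (k+2) * ((n-k)*g)) ∧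
      ((k*g)^2 ≤ n.choose (k-1) * (PP + k*g)) := by
  classical
  set M : Finset (Finset (Fin n)) :=
    (Finset.univ.powersetCard k).filter (fun S => S ∉ Δ.faces) with hM
  set g := M.card with hg
  set 𝒯 : Finset (Finset (Fin n)) := Finset.univ.powersetCard (k+1) with hT
  set tf : Finset (Fin n) → ℕ := fun T => (M.filter (· ⊆ T)).card with htf
  set Xset := 𝒯.filter (fun T => T ∉ Δ.faces ∧ ¬ Δ.IsMissing T) with hXset
  set ℛ : Finset (Finset (Fin n)) := Finset.univ.powersetCard (k-1) with hR
  set af : Finset (Fin n) → ℕ := fun R => (M.filter (fun S => R ⊆ S)).card with haf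
  set PP := ((M ×ˢ M).filter (fun p => (p.1 ∪ p.2).card = k+1)) with hPP
  refine ⟨Xset.card, PP.card, g, ?_, ?_, ?_, ?_⟩
  · -- partition of the (k+1)-subsets
    have h1 : (𝒯.filter (fun T => T ∈ Δ.faces)).card
        + (𝒯.filter (fun T => T ∉ Δ.faces)).card = 𝒯.card :=
      Finset.card_filter_add_card_filter_not _
    have h2 : ((𝒯.filter (fun T => T ∉ Δ.faces)).filter (fun T => Δ.IsMissing T)).card
        + ((𝒯.filter (fun T => T ∉ Δ.faces)).filter (fun T => ¬ Δ.IsMissing T)).card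
        = (𝒯.filter (fun T => T ∉ Δ.faces)).card :=
      Finset.card_filter_add_card_filter_not _
    have h3 : (𝒯.filter (fun T => T ∉ Δ.faces)).filter (fun T => Δ.IsMissing T)
        = 𝒯.filter (fun T => Δ.IsMissing T) := by
      rw [Finset.filter_filter]
      exact Finset.filter_congr fun T _ => by
        constructor
        · exact fun h => h.2
        · exact fun h => ⟨h.1, h⟩
    have h4 : (𝒯.filter (fun T => T ∉ Δ.faces)).filter (fun T => ¬ Δ.IsMissing T)
        = Xset := by rw [hXset, Finset.filter_filter]
    have h5 : Δ.mNum k = (𝒯.filter (fun T => Δ.IsMissing T)).card := by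
      rw [mNum, show {F : Finset (Fin n) | Δ.IsMissing F ∧ F.card = k + 1}
          = ↑(𝒯.filter (fun T => Δ.IsMissing T)) from ?_, Set.ncard_coe_finset]
      ext T
      simp only [Finset.coe_filter, Set.mem_setOf_eq, Set.mem_sep_iff, Finset.mem_coe,
        hT, Finset.mem_powersetCard_univ]
      tauto
    have h6 : Δ.nF (k+1) = (𝒯.filter (fun T => T ∈ Δ.faces)).card := by
      rw [nF]
      congr 1
      ext T
      simp only [Finset.mem_filter, hT, Finset.mem_powersetCard_univ]
      tauto
    have h7 : 𝒯.card = n.choose (k+1) := by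
      rw [hT, Finset.card_powersetCard, Finset.card_univ, Fintype.card_fin]
    have h3c := congrArg Finset.card h3
    have h4c := congrArg Finset.card h4
    omega
  · -- faces plus non-faces of cardinality k
    set 𝒮 : Finset (Finset (Fin n)) := Finset.univ.powersetCard k with hS
    have h1 : (𝒮.filter (fun S => S ∈ Δ.faces)).card
        + M.card = 𝒮.card := by
      rw [hM]; exact Finset.card_filter_add_card_filter_not _
    have h2 : Δ.nF k = (𝒮.filter (fun S => S ∈ Δ.faces)).card := by
      rw [nF]; congr 1; ext S
      simp only [Finset.mem_filter, hS, Finset.mem_powersetCard_univ]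
      tauto
    have h3 : 𝒮.card = n.choose k := by
      rw [hS, Finset.card_powersetCard, Finset.card_univ, Fintype.card_fin]
    omega
  · -- the per-(k+1)-set inequality summed
    have hMcard : ∀ S ∈ M, S.card = k := by
      intro S hS
      exact Finset.mem_powersetCard_univ.mp (Finset.mem_filter.mp hS).1
    -- (i) sum of tf over 𝒯
    have hsumt : ∑ T ∈ 𝒯, tf T = (n-k) * g := by
      have h1 : ∀ T ∈ 𝒯, tf T = ∑ S ∈ M, if S ⊆ T then 1 else 0 :=
        fun T _ => Finset.card_filter _ _
      have h2 : ∀ S ∈ M, (𝒯.filter (fun T => S ⊆ T)).card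
          = ∑ T ∈ 𝒯, if S ⊆ T then 1 else 0 := fun S _ => Finset.card_filter _ _
      have hswap : ∑ T ∈ 𝒯, tf T = ∑ S ∈ M, (𝒯.filter (fun T => S ⊆ T)).card := by
        rw [Finset.sum_congr rfl h1, Finset.sum_congr rfl h2, Finset.sum_comm]
      rw [hswap]
      have hcount : ∀ S ∈ M, (𝒯.filter (fun T => S ⊆ T)).card = n - k := by
        intro S hS
        have hcS : S.card = k := hMcard S hS
        have hb : (𝒯.filter (fun T => S ⊆ T)).card = (Sᶜ.powersetCard 1).card := by
          refine Finset.card_nbij' (fun T => T \ S) (fun W => W ∪ S) ?_ ?_ ?_ ?_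
          · intro T hT'
            have hT2 := Finset.mem_filter.mp hT'
            have hTc : T.card = k+1 := Finset.mem_powersetCard_univ.mp hT2.1
            refine Finset.mem_powersetCard.mpr ⟨?_, ?_⟩
            · intro x hx
              rw [Finset.mem_sdiff] at hx
              rw [Finset.mem_compl]
              exact hx.2
            · rw [Finset.card_sdiff_of_subset hT2.2, hTc, hcS]
              omega
          · intro W hW
            obtain ⟨hWs, hWc⟩ := Finset.mem_powersetCard.mp hW
            have hdisj : Disjoint W S := by
              rw [Finset.disjoint_left]
              intro x hxW hxS
              exact (Finset.mem_compl.mp (hWs hxW)) hxS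
            refine Finset.mem_filter.mpr ⟨Finset.mem_powersetCard_univ.mpr ?_,
              Finset.subset_union_right⟩
            rw [Finset.card_union_of_disjoint hdisj, hWc, hcS, add_comm]
          · intro T hT'
            exact Finset.sdiff_union_of_subset (Finset.mem_filter.mp hT').2
          · intro W hW
            obtain ⟨hWs, _⟩ := Finset.mem_powersetCard.mp hW
            have hdisj : Disjoint W S := by
              rw [Finset.disjoint_left]
              intro x hxW hxS
              exact (Finset.mem_compl.mp (hWs hxW)) hxS
            show (W ∪ S) \ S = W
            rw [Finset.union_sdiff_right, Finset.sdiff_eq_self_of_disjoint hdisj]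
        rw [hb, Finset.card_powersetCard, Finset.card_compl, Fintype.card_fin, hcS,
          Nat.choose_one_right]
      rw [Finset.sum_congr rfl hcount, Finset.sum_const, smul_eq_mul, mul_comm]
    -- (ii) sum of tf^2 over 𝒯
    have hsumt2 : ∑ T ∈ 𝒯, (tf T)^2 = PP.card + ∑ T ∈ 𝒯, tf T := by
      have hmaps : ∀ p ∈ PP, p.1 ∪ p.2 ∈ 𝒯 := by
        intro p hp
        exact Finset.mem_powersetCard_univ.mpr (Finset.mem_filter.mp hp).2
      have hPPc : PP.card = ∑ T ∈ 𝒯, (PP.filter (fun p => p.1 ∪ p.2 = T)).card := by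
        rw [Finset.card_eq_sum_ones PP, ← Finset.sum_fiberwise_of_maps_to hmaps (fun _ => (1:ℕ))]
        exact Finset.sum_congr rfl fun T _ => (Finset.card_eq_sum_ones _).symm
      have hfibT : ∀ T ∈ 𝒯, (PP.filter (fun p => p.1 ∪ p.2 = T)).card + tf T = (tf T)^2 := by
        intro T hT'
        have hTc : T.card = k+1 := Finset.mem_powersetCard_univ.mp hT'
        have hfeq : PP.filter (fun p => p.1 ∪ p.2 = T)
            = ((M.filter (· ⊆ T)) ×ˢ (M.filter (· ⊆ T))).filter (fun p => ¬ (p.1 = p.2)) := by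
          rw [hPP]
          ext p
          simp only [Finset.mem_filter, Finset.mem_product]
          constructor
          · rintro ⟨⟨hpM, hpu⟩, hpT⟩
            have h1 : p.1 ⊆ T := hpT ▸ Finset.subset_union_left
            have h2 : p.2 ⊆ T := hpT ▸ Finset.subset_union_right
            refine ⟨⟨⟨hpM.1, h1⟩, hpM.2, h2⟩, ?_⟩
            intro heq
            rw [heq, Finset.union_self] at hpu
            have := hMcard p.2 hpM.2
            omega
          · rintro ⟨⟨h1', h2'⟩, hne⟩
            have hc1 : p.1.card = k := hMcard _ h1'.1
            have hc2 : p.2.card = k := hMcard _ h2'.1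
            have hsub : p.1 ∪ p.2 ⊆ T := Finset.union_subset h1'.2 h2'.2
            have hlt : k + 1 ≤ (p.1 ∪ p.2).card := by
              by_contra hcon
              push_neg at hcon
              have hss : p.1 ∪ p.2 = p.1 :=
                (Finset.eq_of_subset_of_card_le Finset.subset_union_left (by omega)).symm
              have hs2 : p.2 ⊆ p.1 := by
                rw [← hss]; exact Finset.subset_union_right
              exact hne ((Finset.eq_of_subset_of_card_le hs2 (by omega)).symm)
            have hcardle : (p.1 ∪ p.2).card ≤ k+1 := hTc ▸ Finset.card_le_card hsub
            have hueq : p.1 ∪ p.2 = T := Finset.eq_of_subset_of_card_le hsub (by omega)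
            exact ⟨⟨⟨h1'.1, h2'.1⟩, by omega⟩, hueq⟩
        set Q := M.filter (· ⊆ T) with hQ
        have hsplit := Finset.card_filter_add_card_filter_not
          (s := Q ×ˢ Q) (fun p => p.1 = p.2)
        have hdiag : ((Q ×ˢ Q).filter (fun p => p.1 = p.2)).card = Q.card := by
          refine Finset.card_nbij' (fun p => p.1) (fun S => (S, S)) ?_ ?_ ?_ ?_
          · intro p hp
            exact (Finset.mem_product.mp (Finset.mem_filter.mp hp).1).1
          · intro S hS
            exact Finset.mem_filter.mpr ⟨Finset.mem_product.mpr ⟨hS, hS⟩, rfl⟩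
          · intro p hp
            exact Prod.ext rfl (Finset.mem_filter.mp hp).2
          · intro S _; rfl
        rw [hdiag, Finset.card_product] at hsplit
        have hQt : tf T = Q.card := rfl
        rw [hfeq, hQt, pow_two]
        omega
      calc ∑ T ∈ 𝒯, (tf T)^2
          = ∑ T ∈ 𝒯, ((PP.filter (fun p => p.1 ∪ p.2 = T)).card + tf T) :=
            (Finset.sum_congr rfl fun T hT' => (hfibT T hT').symm)
        _ = (∑ T ∈ 𝒯, (PP.filter (fun p => p.1 ∪ p.2 = T)).card) + ∑ T ∈ 𝒯, tf T :=
            Finset.sum_add_distrib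
        _ = PP.card + ∑ T ∈ 𝒯, tf T := by rw [← hPPc]
    -- (iii) the pointwise inequality
    have hpoint : ∀ T ∈ 𝒯,
        (if (T ∉ Δ.faces ∧ ¬ Δ.IsMissing T) then (k+1) else 0) + (tf T)^2
          ≤ (k+2) * tf T := by
      intro T hT'
      have hTc : T.card = k+1 := Finset.mem_powersetCard_univ.mp hT'
      have htle : tf T ≤ k+1 := by
        have hsub : M.filter (· ⊆ T) ⊆ T.powersetCard k := by
          intro S hS
          have hS' := Finset.mem_filter.mp hS
          exact Finset.mem_powersetCard.mpr ⟨hS'.2, hMcard S hS'.1⟩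
        have := Finset.card_le_card hsub
        rw [Finset.card_powersetCard, hTc] at this
        rw [Nat.choose_succ_self_right] at this
        exact this
      by_cases hcond : (T ∉ Δ.faces ∧ ¬ Δ.IsMissing T)
      · rw [if_pos hcond]
        have htge : 1 ≤ tf T := by
          obtain ⟨hTnf, hTnm⟩ := hcond
          rw [IsMissing] at hTnm
          push_neg at hTnm
          obtain ⟨G, hGT, hGnf⟩ := hTnm hTnf
          have hGc : G.card = k := by
            have hle : G.card ≤ k := by
              have := Finset.card_lt_card hGT
              omega
            by_contra hne
            have hlt : G.card ≤ k - 1 := by omega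
            obtain ⟨S', hGS', hS'c⟩ := Finset.exists_superset_card_eq hlt
              (by rw [Fintype.card_fin]; omega)
            exact hGnf (Δ.down_closed S' (hngh S' hS'c) G hGS')
          have hGM : G ∈ M.filter (· ⊆ T) := by
            refine Finset.mem_filter.mpr ⟨?_, hGT.subset⟩
            exact Finset.mem_filter.mpr ⟨Finset.mem_powersetCard_univ.mpr hGc, hGnf⟩
          have : 0 < (M.filter (· ⊆ T)).card := Finset.card_pos.mpr ⟨G, hGM⟩
          exact this
        -- k+1 + t^2 ≤ (k+2)*t  given 1 ≤ t ≤ k+1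
        have hZ : ((k:ℤ)+1) + (tf T : ℤ)^2 ≤ ((k:ℤ)+2) * (tf T : ℤ) := by
          have h1 : (1:ℤ) ≤ (tf T : ℤ) := by exact_mod_cast htge
          have h2 : (tf T : ℤ) ≤ (k:ℤ)+1 := by exact_mod_cast htle
          nlinarith [mul_nonneg (sub_nonneg.mpr h1) (sub_nonneg.mpr h2)]
        exact_mod_cast hZ
      · rw [if_neg hcond, zero_add, pow_two]
        exact Nat.mul_le_mul_right _ (by omega)
    have hsum_le := Finset.sum_le_sum hpoint
    rw [Finset.sum_add_distrib, ← Finset.mul_sum] at hsum_le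
    have hXind : (∑ T ∈ 𝒯, if (T ∉ Δ.faces ∧ ¬ Δ.IsMissing T) then (k+1) else 0)
        = (k+1) * Xset.card := by
      rw [← Finset.sum_filter, ← hXset, Finset.sum_const, smul_eq_mul, mul_comm]
    rw [hXind, hsumt2, hsumt] at hsum_le
    exact hsum_le
  · -- Cauchy–Schwarz part
    have hMcard : ∀ S ∈ M, S.card = k := by
      intro S hS
      exact Finset.mem_powersetCard_univ.mp (Finset.mem_filter.mp hS).1
    have haf1 : ∑ R ∈ ℛ, af R = k * g := by
      have h1 : ∀ R ∈ ℛ, af R = ∑ S ∈ M, if R ⊆ S then 1 else 0 :=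
        fun R _ => Finset.card_filter _ _
      have h2 : ∀ S ∈ M, (ℛ.filter (fun R => R ⊆ S)).card
          = ∑ R ∈ ℛ, if R ⊆ S then 1 else 0 := fun S _ => Finset.card_filter _ _
      have hswap : ∑ R ∈ ℛ, af R = ∑ S ∈ M, (ℛ.filter (fun R => R ⊆ S)).card := by
        rw [Finset.sum_congr rfl h1, Finset.sum_congr rfl h2, Finset.sum_comm]
      rw [hswap]
      have hcount : ∀ S ∈ M, (ℛ.filter (fun R => R ⊆ S)).card = k := by
        intro S hS
        have hcS : S.card = k := hMcard S hS
        have heq : ℛ.filter (fun R => R ⊆ S) = S.powersetCard (k-1) := by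
          rw [hR]
          ext R
          simp only [Finset.mem_filter, Finset.mem_powersetCard_univ, Finset.mem_powersetCard,
            Finset.subset_univ]
          tauto
        rw [heq, Finset.card_powersetCard, hcS, Nat.choose_symm (by omega : 1 ≤ k),
          Nat.choose_one_right]
      rw [Finset.sum_congr rfl hcount, Finset.sum_const, smul_eq_mul, mul_comm]
    have haf2 : ∑ R ∈ ℛ, (af R)^2 = PP.card + ∑ R ∈ ℛ, af R := by
      have hmaps : ∀ p ∈ PP, p.1 ∩ p.2 ∈ ℛ := by
        intro p hp
        have hp' := Finset.mem_filter.mp hp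
        have hpM := Finset.mem_product.mp hp'.1
        have h1 := hMcard _ hpM.1
        have h2 := hMcard _ hpM.2
        have hiu := Finset.card_inter_add_card_union p.1 p.2
        rw [hR]
        exact Finset.mem_powersetCard_univ.mpr (by omega)
      have hPPc : PP.card = ∑ R ∈ ℛ, (PP.filter (fun p => p.1 ∩ p.2 = R)).card := by
        rw [Finset.card_eq_sum_ones PP, ← Finset.sum_fiberwise_of_maps_to hmaps (fun _ => (1:ℕ))]
        exact Finset.sum_congr rfl fun R _ => (Finset.card_eq_sum_ones _).symm
      have hfibR : ∀ R ∈ ℛ, (PP.filter (fun p => p.1 ∩ p.2 = R)).card + af R = (af R)^2 := by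
        intro R hR'
        have hRc : R.card = k-1 := Finset.mem_powersetCard_univ.mp (hR ▸ hR')
        have hfeq : PP.filter (fun p => p.1 ∩ p.2 = R)
            = ((M.filter (fun S => R ⊆ S)) ×ˢ (M.filter (fun S => R ⊆ S))).filter
                (fun p => ¬ (p.1 = p.2)) := by
          rw [hPP]
          ext p
          simp only [Finset.mem_filter, Finset.mem_product]
          constructor
          · rintro ⟨⟨hpM, hpu⟩, hpR⟩
            have h1 : R ⊆ p.1 := hpR ▸ Finset.inter_subset_left
            have h2 : R ⊆ p.2 := hpR ▸ Finset.inter_subset_right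
            refine ⟨⟨⟨hpM.1, h1⟩, hpM.2, h2⟩, ?_⟩
            intro heq
            rw [heq, Finset.union_self] at hpu
            have := hMcard p.2 hpM.2
            omega
          · rintro ⟨⟨h1', h2'⟩, hne⟩
            have hc1 : p.1.card = k := hMcard _ h1'.1
            have hc2 : p.2.card = k := hMcard _ h2'.1
            have hRsub : R ⊆ p.1 ∩ p.2 := Finset.subset_inter h1'.2 h2'.2
            have hinterlt : (p.1 ∩ p.2).card ≤ k-1 := by
              by_contra hcon
              push_neg at hcon
              have hinter : p.1 ∩ p.2 = p.1 :=
                Finset.eq_of_subset_of_card_le Finset.inter_subset_left (by omega)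
              have hsub12 : p.1 ⊆ p.2 := by
                rw [← hinter]; exact Finset.inter_subset_right
              exact hne (Finset.eq_of_subset_of_card_le hsub12 (by omega))
            have hReq : p.1 ∩ p.2 = R :=
              (Finset.eq_of_subset_of_card_le hRsub (by omega)).symm
            have hiu := Finset.card_inter_add_card_union p.1 p.2
            have hRc2 : (p.1 ∩ p.2).card = k-1 := by rw [hReq, hRc]
            refine ⟨⟨⟨h1'.1, h2'.1⟩, by omega⟩, hReq⟩
        set Q := M.filter (fun S => R ⊆ S) with hQ
        have hsplit := Finset.card_filter_add_card_filter_not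
          (s := Q ×ˢ Q) (fun p => p.1 = p.2)
        have hdiag : ((Q ×ˢ Q).filter (fun p => p.1 = p.2)).card = Q.card := by
          refine Finset.card_nbij' (fun p => p.1) (fun S => (S, S)) ?_ ?_ ?_ ?_
          · intro p hp
            exact (Finset.mem_product.mp (Finset.mem_filter.mp hp).1).1
          · intro S hS
            exact Finset.mem_filter.mpr ⟨Finset.mem_product.mpr ⟨hS, hS⟩, rfl⟩
          · intro p hp
            exact Prod.ext rfl (Finset.mem_filter.mp hp).2
          · intro S _; rfl
        rw [hdiag, Finset.card_product] at hsplit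
        have hQa : af R = Q.card := rfl
        rw [hfeq, hQa, pow_two]
        omega
      calc ∑ R ∈ ℛ, (af R)^2
          = ∑ R ∈ ℛ, ((PP.filter (fun p => p.1 ∩ p.2 = R)).card + af R) :=
            (Finset.sum_congr rfl fun R hR' => (hfibR R hR').symm)
        _ = (∑ R ∈ ℛ, (PP.filter (fun p => p.1 ∩ p.2 = R)).card) + ∑ R ∈ ℛ, af R :=
            Finset.sum_add_distrib
        _ = PP.card + ∑ R ∈ ℛ, af R := by rw [← hPPc]
    have hcs : (∑ R ∈ ℛ, af R)^2 ≤ ℛ.card * ∑ R ∈ ℛ, (af R)^2 := by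
      have := sq_sum_le_card_mul_sum_sq (s := ℛ) (f := fun R => (af R : ℕ))
      exact_mod_cast this
    have hRcard : ℛ.card = n.choose (k-1) := by
      rw [hR, Finset.card_powersetCard, Finset.card_univ, Fintype.card_fin]
    rw [haf1, haf2, haf1, hRcard] at hcs
    exact hcs


end AbsComplex
set_option maxHeartbeats 1000000 in
/-- For `k ≥ 2` and a `(k−1)`-neighborly Eulerian complex `Δ` of dimension
`2k` with `n ≥ 2k + 2` vertices,
`m_k(Δ) ≥ k²·f_{k−1}²/((k+1)·C(n,k−1)) − (n·(k−1) − k·(k−2))·f_{k−1}/(k+1)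
  − [Σ_{i=0}^{k} C(2k+1−i,k)·C(n−2k−2+i,i) + C(n−k−2,k)] + (k+2)·(C(n,k) − f_{k−1})`. -/
theorem statement5 {n k : ℕ} (hk : 2 ≤ k) (hn : 2 * k + 2 ≤ n) (Δ : AbsComplex n)
    (hEul : Δ.IsEulerianDim (2 * k)) (hngh : Δ.Neighborly (k - 1)) :
    (Δ.mNum k : ℚ) ≥
      (k : ℚ) ^ 2 * (Δ.fNum (k - 1) : ℚ) ^ 2 / (((k : ℚ) + 1) * (n.choose (k - 1) : ℚ)) -
        ((n : ℚ) * ((k : ℚ) - 1) - (k : ℚ) * ((k : ℚ) - 2)) * (Δ.fNum (k - 1) : ℚ) /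
          ((k : ℚ) + 1) -
        ((∑ i ∈ Finset.range (k + 1),
            ((2 * k + 1 - i).choose k : ℚ) * ((n - (2 * k + 2) + i).choose i : ℚ)) +
          ((n - (k + 2)).choose k : ℚ)) +
        ((k : ℚ) + 2) * ((n.choose k : ℚ) - (Δ.fNum (k - 1) : ℚ)) := by
  classical
  obtain ⟨X, PP, g, hpart, hfg, hXle, hCS⟩ := Δ.count_main hk hn hngh
  have hkey := Δ.key_frel hk hn hEul hngh
  have hfk : Δ.fNum (k-1) = Δ.nF k := by
    rw [AbsComplex.fNum, AbsComplex.nF]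
    simp only [show k-1+1 = k from by omega]
  set aq : ℚ := (n.choose (k+1) : ℚ) with haq
  set bq : ℚ := (n.choose k : ℚ) with hbq
  set cq : ℚ := (n.choose (k-1) : ℚ) with hcq
  set q2 : ℚ := ((n-(k+2)).choose (k+1) : ℚ) with hq2
  set fq : ℚ := (Δ.nF k : ℚ) with hfq
  set F1 : ℚ := (Δ.nF (k+1) : ℚ) with hF1
  set mq : ℚ := (Δ.mNum k : ℚ) with hmq
  set gq : ℚ := (g : ℚ) with hgq
  set Xq : ℚ := (X : ℚ) with hXq
  set Pq : ℚ := (PP : ℚ) with hPq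
  have h1 : mq + F1 + Xq = aq := by
    rw [hmq, hF1, hXq, haq]; exact_mod_cast congrArg (Nat.cast : ℕ → ℚ) hpart
  have h2 : fq + gq = bq := by
    rw [hfq, hgq, hbq]; exact_mod_cast congrArg (Nat.cast : ℕ → ℚ) hfg
  have h3 : ((k:ℚ)+1)*Xq + (Pq + ((n:ℚ)-k)*gq) ≤ ((k:ℚ)+2)*(((n:ℚ)-k)*gq) := by
    have hc : ((n-k : ℕ) : ℚ) = (n:ℚ) - k := by
      rw [Nat.cast_sub (by omega)]
    have h' : ((k:ℚ)+1)*Xq + (Pq + ((n-k : ℕ) : ℚ)*gq)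
        ≤ ((k:ℚ)+2)*(((n-k : ℕ) : ℚ)*gq) := by
      rw [hXq, hPq, hgq]
      exact_mod_cast hXle
    rw [hc] at h'
    exact h'
  have h4 : (k:ℚ)^2*gq^2 ≤ cq*(Pq + (k:ℚ)*gq) := by
    have h' : (((k:ℚ)*(g:ℚ))^2) ≤ (n.choose (k-1) : ℚ) * ((PP:ℚ) + (k:ℚ)*(g:ℚ)) := by
      exact_mod_cast hCS
    rw [hcq, hPq, hgq]
    nlinarith [h']
  have h5 : F1 + ((k:ℚ)+2)*(bq - fq) = aq - q2 := by
    rw [hF1, hbq, hfq, haq, hq2]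
    exact_mod_cast hkey
  have hb1 : (k:ℚ)*bq = ((n:ℚ)-(k:ℚ)+1)*cq := by
    have h := Nat.choose_succ_right_eq n (k-1)
    rw [show k-1+1 = k by omega] at h
    have hcast : ((n - (k-1) : ℕ) : ℚ) = (n:ℚ) - (k:ℚ) + 1 := by
      rw [Nat.cast_sub (by omega), Nat.cast_sub (by omega : 1 ≤ k)]
      push_cast; ring
    have h' : (n.choose k : ℚ) * (k:ℚ) = (n.choose (k-1) : ℚ) * ((n - (k-1) : ℕ) : ℚ) := by
      exact_mod_cast h
    rw [hcast] at h'
    rw [hbq, hcq]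
    linarith [h']
  have hb2 : ((k:ℚ)+1)*aq = ((n:ℚ)-(k:ℚ))*bq := by
    have h := Nat.choose_succ_right_eq n k
    have hcast : ((n - k : ℕ) : ℚ) = (n:ℚ) - (k:ℚ) := by
      rw [Nat.cast_sub (by omega)]
    have h' : (n.choose (k+1) : ℚ) * ((k:ℚ)+1) = (n.choose k : ℚ) * ((n - k : ℕ) : ℚ) := by
      exact_mod_cast h
    rw [hcast] at h'
    rw [haq, hbq]
    linarith [h']
  have hcpos : (0:ℚ) < cq := by
    rw [hcq]
    exact_mod_cast Nat.choose_pos (by omega : k-1 ≤ n)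
  have hk1pos : (0:ℚ) < (k:ℚ)+1 := by positivity
  have hPsum : ((∑ i ∈ Finset.range (k + 1),
        ((2 * k + 1 - i).choose k : ℚ) * ((n - (2 * k + 2) + i).choose i : ℚ)) +
        ((n - (k + 2)).choose k : ℚ)) = aq - q2 := by
    have h := Pcyc (by omega : 1 ≤ k) hn
    have h' : ((∑ i ∈ Finset.range (k+1),
          (2*k+1-i).choose k * ((n-(2*k+2)+i).choose i) : ℕ) : ℚ)
        + ((((n-(k+2)).choose k : ℕ) : ℚ) + (((n-(k+2)).choose (k+1) : ℕ) : ℚ))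
        = ((n.choose (k+1) : ℕ) : ℚ) := by exact_mod_cast h
    rw [haq, hq2]
    push_cast at h' ⊢
    linarith [h']
  have hmq2 : mq = q2 + ((k:ℚ)+2)*gq - Xq := by
    have hgf : bq - fq = gq := by linarith [h2]
    rw [hgf] at h5
    linarith [h1, h5]
  have hXbound : Xq*(((k:ℚ)+1)*cq) ≤ ((n:ℚ)-(k:ℚ))*gq*(((k:ℚ)+1)*cq)
      + (k:ℚ)*gq*cq - (k:ℚ)^2*gq^2 := by
    have hA : ((k:ℚ)+1)*Xq ≤ ((k:ℚ)+1)*(((n:ℚ)-(k:ℚ))*gq) - Pq := by linarith [h3]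
    have hAc := mul_le_mul_of_nonneg_right hA hcpos.le
    nlinarith [h4, hAc]
  have hDpos : (0:ℚ) < ((k:ℚ)+1)*cq := by positivity
  rw [ge_iff_le, hfk, ← hfq, hPsum, hmq2]
  clear hmq hF1 hfq haq hbq hcq hq2 hgq hXq hPq hkey hfk h3 h4 h5 hpart hfg hXle hCS
  clear_value aq bq cq q2 fq F1 mq gq Xq Pq
  have hcne : cq ≠ 0 := hcpos.ne'
  have hkne : ((k:ℚ)+1) ≠ 0 := hk1pos.ne'
  have hEN : (k:ℚ)^2*fq^2/(((k:ℚ)+1)*cq)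
        - ((n:ℚ)*((k:ℚ)-1) - (k:ℚ)*((k:ℚ)-2))*fq/((k:ℚ)+1) - (aq - q2) + ((k:ℚ)+2)*(bq - fq)
      = ((k:ℚ)^2*fq^2 - ((n:ℚ)*((k:ℚ)-1) - (k:ℚ)*((k:ℚ)-2))*fq*cq
          + (-(aq - q2) + ((k:ℚ)+2)*(bq - fq))*(((k:ℚ)+1)*cq)) / (((k:ℚ)+1)*cq) := by
    field_simp
    ring
  rw [hEN, div_le_iff₀ hDpos]
  have heqP : (k:ℚ)^2*fq^2 - ((n:ℚ)*((k:ℚ)-1) - (k:ℚ)*((k:ℚ)-2))*fq*cq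
          + (-(aq - q2) + ((k:ℚ)+2)*(bq - fq))*(((k:ℚ)+1)*cq)
      = (q2 + ((k:ℚ)+2)*gq)*(((k:ℚ)+1)*cq)
        - (((n:ℚ)-(k:ℚ))*gq*(((k:ℚ)+1)*cq) + (k:ℚ)*gq*cq - (k:ℚ)^2*gq^2) := by
    linear_combination ((k:ℚ)^2*(fq+bq-gq) - ((n:ℚ)*((k:ℚ)-1) - (k:ℚ)*((k:ℚ)-2))*cq
        - ((k:ℚ)+2)*((k:ℚ)+1)*cq) * h2
      + ((k:ℚ)*bq - 2*(k:ℚ)*gq) * hb1 - cq * hb2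
  rw [heqP]
  nlinarith [hXbound]
end

section
/- Let Δ be an Eulerian simplicial complex of dimension 4 with n vertices. Then m_2(Δ) ≥ f_1(Δ)·(4·f_1(Δ) − n²)/(3n) − (4·f_1(Δ) − 10n + 20); equivalently, 3n·m_2(Δ) ≥ f_1(Δ)·(4·f_1(Δ) − n²) − 3n·(4·f_1(Δ) − 10n + 20). -/
namespace AbsComplex

open Finset

variable {n : ℕ}

lemma sum_superset (Δ : AbsComplex n) (hEul : Δ.IsEulerianDim 4) {F : Finset (Fin n)}
    (hF : F ∈ Δ.faces) :
    ∑ H ∈ Δ.faces.filter (fun H => F ⊆ H), (-1 : ℤ) ^ H.card = -1 := by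
  have h := hEul.2.2 F hF
  rw [reducedEuler] at h
  have key : ∑ H ∈ Δ.faces.filter (fun H => F ⊆ H), (-1 : ℤ) ^ H.card
      = ∑ G ∈ Δ.linkFaces F, (-1 : ℤ) ^ F.card * (-(-1 : ℤ) ^ (G.card + 1)) := by
    refine (Finset.sum_nbij' (fun G => G ∪ F) (fun H => H \ F) ?_ ?_ ?_ ?_ ?_).symm
    · intro G hG
      simp only [linkFaces, mem_filter] at hG
      simp only [mem_filter]
      exact ⟨hG.2.2, subset_union_right⟩
    · intro H hH
      simp only [mem_filter] at hH
      simp only [linkFaces, mem_filter]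
      refine ⟨Δ.down_closed H hH.1 _ (sdiff_subset), ?_, ?_⟩
      · exact sdiff_inter_self F H
      · rw [sdiff_union_of_subset hH.2]; exact hH.1
    · intro G hG
      simp only [linkFaces, mem_filter] at hG
      exact union_sdiff_cancel_right (disjoint_iff_inter_eq_empty.mpr hG.2.1)
    · intro H hH
      simp only [mem_filter] at hH
      exact sdiff_union_of_subset hH.2
    · intro G hG
      simp only [linkFaces, mem_filter] at hG
      rw [card_union_of_disjoint (disjoint_iff_inter_eq_empty.mpr hG.2.1)]
      rw [pow_add, pow_add]
      ring
  rw [key, ← Finset.mul_sum, Finset.sum_neg_distrib, h]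
  have h4 : (-1 : ℤ) ^ (4 + F.card) = (-1) ^ F.card := by
    rw [pow_add]; norm_num
  rw [h4]
  have : ((-1 : ℤ) ^ F.card) * ((-1 : ℤ) ^ F.card) = 1 := by
    rw [← pow_add]
    exact Even.neg_one_pow ⟨F.card, rfl⟩
  linear_combination -this

lemma klee (Δ : AbsComplex n) (hEul : Δ.IsEulerianDim 4) (j : ℕ) :
    ∑ k ∈ Finset.range 6,
        ((-1 : ℤ) ^ k * (k.choose j) * ((Δ.faces.filter fun F => F.card = k).card : ℤ))
      = -((Δ.faces.filter fun F => F.card = j).card : ℤ) := by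
  have swap :
      ∑ F ∈ Δ.faces.filter (fun F => F.card = j),
          ∑ H ∈ Δ.faces.filter (fun H => F ⊆ H), (-1 : ℤ) ^ H.card
        = ∑ H ∈ Δ.faces,
            ∑ F ∈ Δ.faces.filter (fun F => F.card = j ∧ F ⊆ H), (-1 : ℤ) ^ H.card := by
    refine Finset.sum_comm' ?_
    intro F H
    simp only [mem_filter]
    tauto
  have lhs_eq :
      ∑ F ∈ Δ.faces.filter (fun F => F.card = j),
          ∑ H ∈ Δ.faces.filter (fun H => F ⊆ H), (-1 : ℤ) ^ H.card
        = -((Δ.faces.filter fun F => F.card = j).card : ℤ) := by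
    rw [Finset.sum_congr rfl fun F hF =>
      Δ.sum_superset hEul (Finset.mem_filter.mp hF).1]
    simp
  have inner_eq : ∀ H ∈ Δ.faces,
      ∑ F ∈ Δ.faces.filter (fun F => F.card = j ∧ F ⊆ H), (-1 : ℤ) ^ H.card
        = (H.card.choose j : ℤ) * (-1 : ℤ) ^ H.card := by
    intro H hH
    have hset : Δ.faces.filter (fun F => F.card = j ∧ F ⊆ H) = H.powersetCard j := by
      ext F
      simp only [mem_filter, mem_powersetCard]
      constructor
      · rintro ⟨_, h1, h2⟩; exact ⟨h2, h1⟩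
      · rintro ⟨h2, h1⟩; exact ⟨Δ.down_closed H hH F h2, h1, h2⟩
    rw [hset, Finset.sum_const, card_powersetCard]
    simp [nsmul_eq_mul]
  have rhs_eq :
      ∑ H ∈ Δ.faces, (H.card.choose j : ℤ) * (-1 : ℤ) ^ H.card
        = ∑ k ∈ Finset.range 6,
            ((-1 : ℤ) ^ k * (k.choose j) * ((Δ.faces.filter fun F => F.card = k).card : ℤ)) := by
    rw [← Finset.sum_fiberwise_of_maps_to (g := fun H => H.card) (t := Finset.range 6)
      (fun H hH => Finset.mem_range.mpr (Nat.lt_succ_of_le (hEul.1 H hH)))]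
    refine Finset.sum_congr rfl fun k _ => ?_
    have hconst : ∀ H ∈ Δ.faces.filter (fun i => i.card = k),
        ((H.card.choose j : ℤ) * (-1 : ℤ) ^ H.card) = ((k.choose j : ℤ) * (-1 : ℤ) ^ k) := by
      intro H hH; rw [(Finset.mem_filter.mp hH).2]
    rw [Finset.sum_congr rfl hconst, Finset.sum_const, nsmul_eq_mul]
    ring
  rw [swap, Finset.sum_congr rfl inner_eq, rhs_eq] at lhs_eq
  exact lhs_eq

lemma empty_mem (Δ : AbsComplex n) (hEul : Δ.IsEulerianDim 4) : ∅ ∈ Δ.faces := by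
  obtain ⟨F, hF, -⟩ := hEul.2.1
  exact Δ.down_closed F hF ∅ (Finset.empty_subset F)

lemma n0 (Δ : AbsComplex n) (hEul : Δ.IsEulerianDim 4) :
    (Δ.faces.filter fun F => F.card = 0).card = 1 := by
  have : Δ.faces.filter (fun F => F.card = 0) = {∅} := by
    ext F
    simp only [mem_filter, Finset.card_eq_zero, Finset.mem_singleton]
    constructor
    · rintro ⟨-, h⟩; exact h
    · rintro rfl; exact ⟨Δ.empty_mem hEul, rfl⟩
  rw [this, Finset.card_singleton]

lemma n1 (Δ : AbsComplex n) :
    (Δ.faces.filter fun F => F.card = 1).card = n := by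
  have : Δ.faces.filter (fun F => F.card = 1) = Finset.univ.image (fun v : Fin n => {v}) := by
    ext F
    simp only [mem_filter, Finset.card_eq_one, Finset.mem_image, Finset.mem_univ, true_and]
    constructor
    · rintro ⟨-, v, rfl⟩; exact ⟨v, rfl⟩
    · rintro ⟨v, rfl⟩; exact ⟨Δ.singleton_mem v, v, rfl⟩
  rw [this, Finset.card_image_of_injective _ Finset.singleton_injective]
  simp

lemma dehn_sommerville (Δ : AbsComplex n) (hEul : Δ.IsEulerianDim 4) :
    ((Δ.faces.filter fun F => F.card = 3).card : ℤ)
      = 4 * ((Δ.faces.filter fun F => F.card = 2).card : ℤ) - 10 * n + 20 := by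
  have r0 := Δ.klee hEul 0
  have r1 := Δ.klee hEul 1
  have r3 := Δ.klee hEul 3
  simp only [Finset.sum_range_succ, Finset.sum_range_zero, Nat.choose] at r0 r1 r3
  rw [Δ.n0 hEul, Δ.n1] at r0 r1 r3
  push_cast at r0 r1 r3
  norm_num at r0 r1 r3
  linarith

def deg (Δ : AbsComplex n) (u : Fin n) : ℕ :=
  (Finset.univ.filter fun v => v ≠ u ∧ {u, v} ∈ Δ.faces).card

def edges (Δ : AbsComplex n) : Finset (Finset (Fin n)) :=
  Δ.faces.filter fun F => F.card = 2

def tri (Δ : AbsComplex n) : Finset (Finset (Fin n)) :=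
  (Finset.univ.powersetCard 3).filter fun S => ∀ e ∈ S.powersetCard 2, e ∈ Δ.faces

def cnSet (Δ : AbsComplex n) (F : Finset (Fin n)) : Finset (Fin n) :=
  Finset.univ.filter fun w => w ∉ F ∧ ∀ u ∈ F, {u, w} ∈ Δ.faces

lemma edge_count (Δ : AbsComplex n) (u : Fin n) :
    (Δ.edges.filter fun F => u ∈ F).card = Δ.deg u := by
  rw [deg]
  refine (Finset.card_bij (fun v _ => ({u, v} : Finset (Fin n))) ?_ ?_ ?_).symm
  · intro v hv
    simp only [Finset.mem_filter, Finset.mem_univ, true_and] at hv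
    simp only [edges, Finset.mem_filter]
    exact ⟨⟨hv.2, Finset.card_pair (Ne.symm hv.1)⟩, Finset.mem_insert_self u {v}⟩
  · intro v₁ h₁ v₂ h₂ heq
    simp only [Finset.mem_filter, Finset.mem_univ, true_and] at h₁ h₂
    have heq' : ({u, v₁} : Finset (Fin n)) = {u, v₂} := heq
    have : v₁ ∈ ({u, v₂} : Finset (Fin n)) := by rw [← heq']; simp
    rcases Finset.mem_insert.mp this with h | h
    · exact absurd h h₁.1
    · simpa using h
  · intro F hF
    simp only [edges, Finset.mem_filter] at hF
    obtain ⟨⟨hFf, hc⟩, hu⟩ := hF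
    obtain ⟨x, y, hxy, rfl⟩ := Finset.card_eq_two.mp hc
    rcases Finset.mem_insert.mp hu with rfl | h
    · refine ⟨y, ?_, rfl⟩
      simp only [Finset.mem_filter, Finset.mem_univ, true_and]
      exact ⟨hxy.symm, hFf⟩
    · have hu' : u = y := by simpa using h
      subst hu'
      refine ⟨x, ?_, ?_⟩
      · simp only [Finset.mem_filter, Finset.mem_univ, true_and]
        exact ⟨hxy, by rwa [Finset.pair_comm]⟩
      · show ({u, x} : Finset (Fin n)) = {x, u}
        rw [Finset.pair_comm]

lemma sum_deg (Δ : AbsComplex n) :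
    ∑ u : Fin n, Δ.deg u = 2 * Δ.edges.card := by
  calc ∑ u : Fin n, Δ.deg u
      = ∑ u ∈ Finset.univ, ∑ F ∈ Δ.edges.filter (fun F => u ∈ F), 1 :=
        Finset.sum_congr rfl fun u _ => by
          rw [Finset.sum_const, smul_eq_mul, mul_one, edge_count]
    _ = ∑ F ∈ Δ.edges, ∑ u ∈ Finset.univ.filter (fun u => u ∈ F), 1 := by
        refine Finset.sum_comm' ?_
        intro u F
        simp only [Finset.mem_filter, Finset.mem_univ, true_and]
        tauto
    _ = ∑ F ∈ Δ.edges, F.card := by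
        refine Finset.sum_congr rfl fun F _ => ?_
        rw [Finset.sum_const, smul_eq_mul, mul_one, Finset.filter_univ_mem]
    _ = ∑ F ∈ Δ.edges, 2 :=
        Finset.sum_congr rfl fun F hF => (Finset.mem_filter.mp hF).2
    _ = 2 * Δ.edges.card := by rw [Finset.sum_const, smul_eq_mul, mul_comm]

lemma sum_deg_sq (Δ : AbsComplex n) :
    ∑ F ∈ Δ.edges, ∑ u ∈ F, Δ.deg u = ∑ u : Fin n, (Δ.deg u) ^ 2 := by
  calc ∑ F ∈ Δ.edges, ∑ u ∈ F, Δ.deg u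
      = ∑ F ∈ Δ.edges, ∑ u ∈ Finset.univ.filter (fun u => u ∈ F), Δ.deg u := by
        refine Finset.sum_congr rfl fun F _ => ?_
        rw [Finset.filter_univ_mem]
    _ = ∑ u ∈ Finset.univ, ∑ F ∈ Δ.edges.filter (fun F => u ∈ F), Δ.deg u := by
        refine Finset.sum_comm' ?_
        intro F u
        simp only [Finset.mem_filter, Finset.mem_univ, true_and]
        tauto
    _ = ∑ u : Fin n, (Δ.deg u) ^ 2 := by
        refine Finset.sum_congr rfl fun u _ => ?_
        rw [Finset.sum_const, smul_eq_mul, edge_count, sq]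

lemma cn_lb (Δ : AbsComplex n) {F : Finset (Fin n)} (hF : F ∈ Δ.edges) :
    (∑ u ∈ F, (Δ.deg u : ℤ)) - n ≤ ((Δ.cnSet F).card : ℤ) := by
  simp only [edges, Finset.mem_filter] at hF
  obtain ⟨x, y, hxy, rfl⟩ := Finset.card_eq_two.mp hF.2
  have hset : Δ.cnSet {x, y} =
      (Finset.univ.filter fun v => v ≠ x ∧ {x, v} ∈ Δ.faces) ∩
      (Finset.univ.filter fun v => v ≠ y ∧ {y, v} ∈ Δ.faces) := by
    ext w
    simp only [cnSet, Finset.mem_inter, Finset.mem_filter, Finset.mem_univ, true_and,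
      Finset.mem_insert, Finset.mem_singleton]
    constructor
    · rintro ⟨hw, hall⟩
      push_neg at hw
      exact ⟨⟨hw.1, hall x (by simp)⟩, hw.2, hall y (by simp)⟩
    · rintro ⟨⟨h1, h2⟩, h3, h4⟩
      refine ⟨by push_neg; exact ⟨h1, h3⟩, ?_⟩
      intro u hu
      rcases hu with rfl | rfl
      · exact h2
      · exact h4
  have hcard := Finset.card_inter_add_card_union
    (Finset.univ.filter fun v => v ≠ x ∧ {x, v} ∈ Δ.faces)
    (Finset.univ.filter fun v => v ≠ y ∧ {y, v} ∈ Δ.faces)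
  have hle : ((Finset.univ.filter fun v => v ≠ x ∧ {x, v} ∈ Δ.faces) ∪
      (Finset.univ.filter fun v => v ≠ y ∧ {y, v} ∈ Δ.faces)).card ≤ n := by
    refine le_trans (Finset.card_le_univ _) ?_
    simp
  have hdx : Δ.deg x = (Finset.univ.filter fun v => v ≠ x ∧ {x, v} ∈ Δ.faces).card := rfl
  have hdy : Δ.deg y = (Finset.univ.filter fun v => v ≠ y ∧ {y, v} ∈ Δ.faces).card := rfl
  rw [Finset.sum_pair hxy, hset, hdx, hdy]
  zify at hcard hle
  linarith

lemma cn_sum (Δ : AbsComplex n) :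
    ∑ F ∈ Δ.edges, (Δ.cnSet F).card = 3 * Δ.tri.card := by
  classical
  set P : Finset (Finset (Fin n) × Fin n) :=
    (Δ.edges ×ˢ Finset.univ).filter
      (fun p => p.2 ∉ p.1 ∧ ∀ u ∈ p.1, {u, p.2} ∈ Δ.faces) with hP
  have hPmem : ∀ p : Finset (Fin n) × Fin n, p ∈ P ↔
      p.1 ∈ Δ.edges ∧ p.2 ∉ p.1 ∧ ∀ u ∈ p.1, {u, p.2} ∈ Δ.faces := by
    intro p
    simp [hP, Finset.mem_filter, Finset.mem_product]
  have h1 : P.card = ∑ F ∈ Δ.edges, (Δ.cnSet F).card := by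
    rw [Finset.card_eq_sum_card_fiberwise (f := Prod.fst) (t := Δ.edges)
      (fun p hp => ((hPmem p).mp hp).1)]
    refine Finset.sum_congr rfl fun F hF => ?_
    refine Finset.card_bij' (fun p _ => p.2) (fun w _ => (F, w)) ?_ ?_ ?_ ?_
    · intro p hp
      obtain ⟨hp1, hp2⟩ := Finset.mem_filter.mp hp
      obtain ⟨-, h2, h3⟩ := (hPmem p).mp hp1
      simp only [cnSet, Finset.mem_filter, Finset.mem_univ, true_and]
      rw [← hp2]
      exact ⟨h2, h3⟩
    · intro w hw
      simp only [cnSet, Finset.mem_filter, Finset.mem_univ, true_and] at hw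
      refine Finset.mem_filter.mpr ⟨(hPmem _).mpr ⟨hF, hw.1, hw.2⟩, rfl⟩
    · intro p hp
      have := (Finset.mem_filter.mp hp).2
      exact Prod.ext this.symm rfl
    · intro w hw
      rfl
  have h2 : P.card = ∑ S ∈ Δ.tri, 3 := by
    have hmaps : ∀ p ∈ P, insert p.2 p.1 ∈ Δ.tri := by
      intro p hp
      obtain ⟨hpe, hp2, hp3⟩ := (hPmem p).mp hp
      simp only [edges, Finset.mem_filter] at hpe
      simp only [tri, Finset.mem_filter, Finset.mem_powersetCard, Finset.subset_univ, true_and]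
      refine ⟨?_, ?_⟩
      · rw [Finset.card_insert_of_notMem hp2, hpe.2]
      · intro e he
        obtain ⟨hesub, hec⟩ := he
        by_cases hw : p.2 ∈ e
        · obtain ⟨u, hu⟩ := Finset.card_eq_one.mp
            (by rw [Finset.card_erase_of_mem hw, hec])
          have hue : u ∈ e.erase p.2 := by rw [hu]; simp
          have hu2 : u ≠ p.2 := (Finset.mem_erase.mp hue).1
          have hu1 : u ∈ p.1 := by
            rcases Finset.mem_insert.mp (hesub (Finset.mem_erase.mp hue).2) with h | h
            · exact absurd h hu2
            · exact h
          have he' : e = {u, p.2} := by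
            rw [← Finset.insert_erase hw, hu, Finset.pair_comm]
          rw [he']
          exact hp3 u hu1
        · have hsub : e ⊆ p.1 := fun x hx => by
            rcases Finset.mem_insert.mp (hesub hx) with rfl | h
            · exact absurd hx hw
            · exact h
          have : e = p.1 := Finset.eq_of_subset_of_card_le hsub (by rw [hpe.2, hec])
          rw [this]
          exact hpe.1
    rw [Finset.card_eq_sum_card_fiberwise hmaps]
    refine Finset.sum_congr rfl fun S hS => ?_
    simp only [tri, Finset.mem_filter, Finset.mem_powersetCard, Finset.subset_univ,
      true_and] at hS
    have := Finset.card_bij (s := P.filter (fun p => insert p.2 p.1 = S)) (t := S)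
      (fun p _ => p.2) ?_ ?_ ?_
    · rw [this, hS.1]
    · intro p hp
      have h := (Finset.mem_filter.mp hp).2
      show p.2 ∈ S
      rw [← h]
      exact Finset.mem_insert_self _ _
    · intro p hp q hq hpq
      have hpq' : p.2 = q.2 := hpq
      obtain ⟨hp1, hp2⟩ := Finset.mem_filter.mp hp
      obtain ⟨hq1, hq2⟩ := Finset.mem_filter.mp hq
      have hpn := ((hPmem p).mp hp1).2.1
      have hqn := ((hPmem q).mp hq1).2.1
      have h1 : p.1 = S.erase p.2 := by rw [← hp2, Finset.erase_insert hpn]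
      have h2 : q.1 = S.erase q.2 := by rw [← hq2, Finset.erase_insert hqn]
      refine Prod.ext ?_ hpq'
      rw [h1, h2, hpq']
    · intro w hw
      refine ⟨(S.erase w, w), ?_, ?_⟩
      · refine Finset.mem_filter.mpr ⟨(hPmem _).mpr ⟨?_, ?_, ?_⟩, ?_⟩
        · simp only [edges, Finset.mem_filter]
          constructor
          · refine hS.2 _ ⟨Finset.erase_subset _ _, ?_⟩
            rw [Finset.card_erase_of_mem hw, hS.1]
          · rw [Finset.card_erase_of_mem hw, hS.1]
        · simp
        · intro u hu
          obtain ⟨hu1, hu2⟩ := Finset.mem_erase.mp hu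
          refine hS.2 _ ⟨?_, Finset.card_pair hu1⟩
          intro z hz
          rcases Finset.mem_insert.mp hz with rfl | hz
          · exact hu2
          · rw [Finset.mem_singleton.mp hz]; exact hw
        · exact Finset.insert_erase hw
      · rfl
  rw [← h1, h2, Finset.sum_const, smul_eq_mul, mul_comm]

lemma tri_split (Δ : AbsComplex n) (hEul : Δ.IsEulerianDim 4) :
    Δ.tri.card = (Δ.faces.filter fun F => F.card = 3).card + Δ.mNum 2 := by
  classical
  have hsplit := Finset.card_filter_add_card_filter_not
    (s := Δ.tri) (p := fun S => S ∈ Δ.faces)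
  have h1 : Δ.tri.filter (fun S => S ∈ Δ.faces) = Δ.faces.filter (fun F => F.card = 3) := by
    ext S
    simp only [tri, Finset.mem_filter, Finset.mem_powersetCard, Finset.subset_univ, true_and]
    constructor
    · rintro ⟨⟨hc, -⟩, hf⟩; exact ⟨hf, hc⟩
    · rintro ⟨hf, hc⟩
      exact ⟨⟨hc, fun e he => Δ.down_closed S hf e he.1⟩, hf⟩
  have h2 : Δ.mNum 2 = (Δ.tri.filter (fun S => S ∉ Δ.faces)).card := by
    rw [mNum, ← Set.ncard_coe_finset]
    congr 1
    ext S
    simp only [Finset.coe_filter, Set.mem_setOf_eq, tri, Finset.mem_filter,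
      Finset.mem_powersetCard, Finset.subset_univ, true_and]
    constructor
    · rintro ⟨⟨hnf, hmiss⟩, hc⟩
      refine ⟨⟨hc, ?_⟩, hnf⟩
      intro e he
      obtain ⟨hesub, hec⟩ := he
      refine hmiss e (Finset.ssubset_iff_subset_ne.mpr ⟨hesub, ?_⟩)
      intro h
      rw [h, hc] at hec
      norm_num at hec
    · rintro ⟨⟨hc, hall⟩, hnf⟩
      refine ⟨⟨hnf, ?_⟩, hc⟩
      intro G hG
      have hG3 : G.card < 3 := by
        have := Finset.card_lt_card hG
        rwa [hc] at this
      have h0 : G.card = 0 ∨ G.card = 1 ∨ G.card = 2 := by omega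
      rcases h0 with h0 | h0 | h0
      · rw [Finset.card_eq_zero.mp h0]
        exact Δ.empty_mem hEul
      · obtain ⟨v, rfl⟩ := Finset.card_eq_one.mp h0
        exact Δ.singleton_mem v
      · exact hall G ⟨hG.subset, h0⟩
  rw [← h1, h2]
  exact hsplit.symm

end AbsComplex

/-- For an Eulerian complex `Δ` of dimension `4` with `n` vertices,
`3n·m_2(Δ) ≥ f_1(Δ)·(4·f_1(Δ) − n²) − 3n·(4·f_1(Δ) − 10n + 20)`. -/
theorem statement7 {n : ℕ} (Δ : AbsComplex n) (hEul : Δ.IsEulerianDim 4) :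
    3 * (n : ℤ) * (Δ.mNum 2 : ℤ) ≥
      (Δ.fNum 1 : ℤ) * (4 * (Δ.fNum 1 : ℤ) - (n : ℤ) ^ 2) -
        3 * (n : ℤ) * (4 * (Δ.fNum 1 : ℤ) - 10 * (n : ℤ) + 20) := by
  classical
  have hf1 : Δ.fNum 1 = (Δ.faces.filter fun F => F.card = 2).card := by
    simp [AbsComplex.fNum]
  set e : ℤ := ((Δ.faces.filter fun F => F.card = 2).card : ℤ) with he
  set T : ℤ := (Δ.tri.card : ℤ) with hT
  set D : ℤ := ∑ u : Fin n, (Δ.deg u : ℤ) ^ 2 with hD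
  have k1 : D - (n : ℤ) * e ≤ 3 * T := by
    have hsum : ∑ F ∈ Δ.edges, ((∑ u ∈ F, (Δ.deg u : ℤ)) - (n : ℤ))
        ≤ ∑ F ∈ Δ.edges, ((Δ.cnSet F).card : ℤ) :=
      Finset.sum_le_sum fun F hF => Δ.cn_lb hF
    have hL : ∑ F ∈ Δ.edges, ((∑ u ∈ F, (Δ.deg u : ℤ)) - (n : ℤ)) = D - (n : ℤ) * e := by
      rw [Finset.sum_sub_distrib, Finset.sum_const, nsmul_eq_mul, hD, he]
      have h1 : ∑ F ∈ Δ.edges, ∑ u ∈ F, (Δ.deg u : ℤ)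
          = ((∑ F ∈ Δ.edges, ∑ u ∈ F, Δ.deg u : ℕ) : ℤ) := by push_cast; rfl
      rw [h1, Δ.sum_deg_sq]
      have h2 : Δ.edges.card = (Δ.faces.filter fun F => F.card = 2).card := rfl
      rw [h2]
      push_cast
      ring
    have hR : ∑ F ∈ Δ.edges, ((Δ.cnSet F).card : ℤ) = 3 * T := by
      rw [hT]
      have h1 : ∑ F ∈ Δ.edges, ((Δ.cnSet F).card : ℤ)
          = ((∑ F ∈ Δ.edges, (Δ.cnSet F).card : ℕ) : ℤ) := by push_cast; rfl
      rw [h1, Δ.cn_sum]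
      push_cast
      ring
    rw [hL, hR] at hsum
    exact hsum
  have k2 : 4 * e ^ 2 ≤ (n : ℤ) * D := by
    have hcs := sq_sum_le_card_mul_sum_sq (s := (Finset.univ : Finset (Fin n)))
      (f := fun u => (Δ.deg u : ℤ))
    have hsd : ∑ u : Fin n, (Δ.deg u : ℤ) = 2 * e := by
      have h1 : ∑ u : Fin n, (Δ.deg u : ℤ) = ((∑ u : Fin n, Δ.deg u : ℕ) : ℤ) := by
        push_cast; rfl
      rw [h1, Δ.sum_deg, he]
      have h2 : Δ.edges.card = (Δ.faces.filter fun F => F.card = 2).card := rfl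
      rw [h2]
      push_cast
      ring
    rw [hsd] at hcs
    simp only [Finset.card_univ, Fintype.card_fin] at hcs
    calc 4 * e ^ 2 = (2 * e) ^ 2 := by ring
      _ ≤ (n : ℤ) * D := hcs
  have hn : (0 : ℤ) ≤ n := Int.natCast_nonneg n
  have key : 4 * e ^ 2 - (n : ℤ) ^ 2 * e ≤ 3 * (n : ℤ) * T := by
    have hmul := mul_le_mul_of_nonneg_left k1 hn
    nlinarith [hmul, k2]
  have hds := Δ.dehn_sommerville hEul
  have htri := Δ.tri_split hEul
  have hm : (Δ.mNum 2 : ℤ) = T - ((Δ.faces.filter fun F => F.card = 3).card : ℤ) := by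
    rw [hT]
    have h1 : (Δ.tri.card : ℤ)
        = ((Δ.faces.filter fun F => F.card = 3).card : ℤ) + (Δ.mNum 2 : ℤ) := by
      exact_mod_cast congrArg (Nat.cast : ℕ → ℤ) htri
    linarith
  rw [ge_iff_le, hf1, ← he, hm, hds]
  linarith [key]
end

section
/- Let Δ be a flag Eulerian simplicial complex of dimension 3 with n vertices. Then f_1(Δ) < n²/4 + 3n/2; equivalently, 4·f_1(Δ) < n² + 6n. -/
open Finset

theorem IsLowerSet.sum_card_supersets_eq {α : Type*} [DecidableEq α] {s : Finset (Finset α)}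
    (hs : IsLowerSet (s : Set (Finset α))) (k : ℕ) :
    ∑ A ∈ s with A.card = k, #{B ∈ s | A ⊆ B ∧ B.card = k + 1} =
      (k + 1) * #{B ∈ s | B.card = k + 1} := by
  have hbelow : ∀ B ∈ {B ∈ s | B.card = k + 1},
      #({A ∈ s | A.card = k}.bipartiteBelow (· ⊆ ·) B) = k + 1 := by
    intro B hB
    rw [mem_filter] at hB
    have : {A ∈ s | A.card = k}.bipartiteBelow (· ⊆ ·) B = B.powersetCard k := by
      ext A
      simp only [bipartiteBelow, mem_filter, mem_powersetCard]
      exact ⟨fun h => ⟨h.2, h.1.2⟩, fun h => ⟨⟨hs h.1 hB.1, h.2⟩, h.1⟩⟩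
    rw [this, card_powersetCard, hB.2, Nat.choose_succ_self_right]
  have := sum_card_bipartiteAbove_eq_sum_card_bipartiteBelow
    (s := {A ∈ s | A.card = k}) (t := {B ∈ s | B.card = k + 1}) (r := (· ⊆ ·))
  simp only [bipartiteAbove, filter_filter] at this
  rw [sum_congr rfl hbelow, sum_const, smul_eq_mul, mul_comm] at this
  rw [← this]
  exact sum_congr rfl fun A _ => congrArg card (filter_congr fun B _ => and_comm)

namespace SimpleGraph

variable {V : Type*} [Fintype V] (G : SimpleGraph V) [DecidableRel G.Adj]

theorem sum_sum_neighborFinset {M : Type*} [AddCommMonoid M] (f : V → M) :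
    ∑ v, ∑ x ∈ G.neighborFinset v, f x = ∑ x, G.degree x • f x := by
  simp_rw [neighborFinset_eq_filter, sum_filter]
  rw [sum_comm]
  refine sum_congr rfl fun x _ => ?_
  rw [← sum_filter, sum_const, ← card_neighborFinset_eq_degree, neighborFinset_eq_filter]
  simp_rw [G.adj_comm]

theorem degree_sq_add_sum_degree_le [DecidableEq V] (v : V) :
    G.degree v ^ 2 + ∑ x ∈ G.neighborFinset v, G.degree x ≤
      Fintype.card V * G.degree v +
        ∑ x ∈ G.neighborFinset v, #(G.neighborFinset v ∩ G.neighborFinset x) := by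
  have h : ∀ x, G.degree v + G.degree x ≤
      Fintype.card V + #(G.neighborFinset v ∩ G.neighborFinset x) := fun x => by
    rw [← card_neighborFinset_eq_degree, ← card_neighborFinset_eq_degree,
      ← card_union_add_card_inter]
    gcongr
    exact card_le_univ _
  calc G.degree v ^ 2 + ∑ x ∈ G.neighborFinset v, G.degree x
      = ∑ x ∈ G.neighborFinset v, (G.degree v + G.degree x) := by
        rw [sum_add_distrib, sum_const, card_neighborFinset_eq_degree, smul_eq_mul, sq]
    _ ≤ ∑ x ∈ G.neighborFinset v,
          (Fintype.card V + #(G.neighborFinset v ∩ G.neighborFinset x)) :=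
        sum_le_sum fun x _ => h x
    _ = _ := by
        rw [sum_add_distrib, sum_const, card_neighborFinset_eq_degree, smul_eq_mul, mul_comm]

end SimpleGraph

namespace AbsComplex

variable {n : ℕ} (Δ : AbsComplex n)

def linkVertices (F : Finset (Fin n)) : Finset (Fin n) :=
  {z | z ∉ F ∧ insert z F ∈ Δ.faces}

variable {Δ} in
theorem mem_linkVertices {F : Finset (Fin n)} {z : Fin n} :
    z ∈ Δ.linkVertices F ↔ z ∉ F ∧ insert z F ∈ Δ.faces := by
  simp [linkVertices]

variable {Δ} in
theorem mem_linkFaces {F G : Finset (Fin n)} :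
    G ∈ Δ.linkFaces F ↔ Disjoint G F ∧ G ∪ F ∈ Δ.faces := by
  simp only [linkFaces, mem_filter, disjoint_iff_inter_eq_empty]
  exact ⟨fun h => h.2, fun h => ⟨Δ.down_closed _ h.2 _ subset_union_left, h⟩⟩

theorem isLowerSet_linkFaces (F : Finset (Fin n)) :
    IsLowerSet (Δ.linkFaces F : Set (Finset (Fin n))) := fun G G' hG'G hG => by
  rw [mem_coe, mem_linkFaces] at hG ⊢
  exact ⟨hG.1.mono_left hG'G, Δ.down_closed _ hG.2 _ (union_subset_union_left hG'G)⟩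

theorem linkFaces_empty : Δ.linkFaces ∅ = Δ.faces := by
  ext G
  simp [mem_linkFaces]

theorem filter_linkFaces_card_eq_zero {F : Finset (Fin n)} (hF : F ∈ Δ.faces) :
    {G ∈ Δ.linkFaces F | G.card = 0} = {∅} := by
  ext G
  simp only [mem_filter, card_eq_zero, mem_singleton, mem_linkFaces]
  exact ⟨And.right, fun h => ⟨⟨h ▸ disjoint_empty_left F, by simpa [h]⟩, h⟩⟩

theorem filter_linkFaces_card_eq_one (F : Finset (Fin n)) :
    {G ∈ Δ.linkFaces F | G.card = 1} =
      (Δ.linkVertices F).map ⟨singleton, singleton_injective⟩ := by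
  ext G
  simp only [mem_filter, card_eq_one, mem_map, mem_linkFaces, mem_linkVertices,
    Function.Embedding.coeFn_mk]
  constructor
  · rintro ⟨⟨hdisj, hG⟩, z, rfl⟩
    exact ⟨z, ⟨disjoint_singleton_left.1 hdisj, by simpa using hG⟩, rfl⟩
  · rintro ⟨z, ⟨hz, hzF⟩, rfl⟩
    exact ⟨⟨disjoint_singleton_left.2 hz, by simpa using hzF⟩, z, rfl⟩

theorem card_supersets_mem_linkFaces {F A : Finset (Fin n)} (hA : A ∈ Δ.linkFaces F) :
    #{B ∈ Δ.linkFaces F | A ⊆ B ∧ B.card = A.card + 1} = #(Δ.linkVertices (A ∪ F)) := by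
  rw [mem_linkFaces] at hA
  symm
  refine card_nbij (insert · A) (fun z hz => ?_) (fun z hz w hw h => ?_) (fun B hB => ?_)
  · obtain ⟨hz, hzF⟩ := mem_linkVertices.1 hz
    simp only [mem_union, not_or] at hz
    simp only [coe_filter, Set.mem_ofPred_eq, mem_linkFaces]
    refine ⟨⟨disjoint_insert_left.2 ⟨hz.2, hA.1⟩, by rwa [insert_union]⟩,
      subset_insert z A, card_insert_of_notMem hz.1⟩
  · have hz := (mem_linkVertices.1 hz).1
    simp only [mem_union, not_or] at hz
    exact (insert_inj hz.1).1 h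
  · simp only [coe_filter, Set.mem_ofPred_eq, mem_linkFaces] at hB
    obtain ⟨z, hzA, rfl⟩ := exists_eq_insert_iff.2 ⟨hB.2.1, hB.2.2.symm⟩
    have hzF : z ∉ F := disjoint_insert_left.1 hB.1.1 |>.1
    refine ⟨z, mem_linkVertices.2 ⟨by simp [hzA, hzF], ?_⟩, rfl⟩
    rw [← insert_union]
    exact hB.1.2

theorem sum_card_linkVertices (F : Finset (Fin n)) (k : ℕ) :
    ∑ A ∈ Δ.linkFaces F with A.card = k, #(Δ.linkVertices (A ∪ F)) =
      (k + 1) * #{B ∈ Δ.linkFaces F | B.card = k + 1} := by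
  rw [← (Δ.isLowerSet_linkFaces F).sum_card_supersets_eq k]
  refine sum_congr rfl fun A hA => ?_
  obtain ⟨hAF, rfl⟩ := mem_filter.1 hA
  exact (Δ.card_supersets_mem_linkFaces hAF).symm

def oneSkeleton : SimpleGraph (Fin n) where
  Adj u v := u ≠ v ∧ {u, v} ∈ Δ.faces
  symm := ⟨fun u v h => ⟨h.1.symm, pair_comm u v ▸ h.2⟩⟩
  loopless := ⟨fun _ h => h.1 rfl⟩

instance : DecidableRel Δ.oneSkeleton.Adj :=
  fun u v => inferInstanceAs (Decidable (u ≠ v ∧ _))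

theorem neighborFinset_oneSkeleton (v : Fin n) :
    Δ.oneSkeleton.neighborFinset v = Δ.linkVertices {v} := by
  ext x
  rw [SimpleGraph.mem_neighborFinset, mem_linkVertices, mem_singleton, pair_comm]
  exact ne_comm.and Iff.rfl

theorem sum_degree_oneSkeleton : ∑ v, Δ.oneSkeleton.degree v = 2 * Δ.fNum 1 := by
  have h := Δ.sum_card_linkVertices ∅ 1
  rw [filter_linkFaces_card_eq_one, sum_map, linkFaces_empty] at h
  have huniv : Δ.linkVertices ∅ = univ := by
    ext z
    simpa [mem_linkVertices] using Δ.singleton_mem z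
  simpa [huniv, ← neighborFinset_oneSkeleton, fNum] using h

variable {Δ} {D : ℕ}

theorem IsEulerianDim.card_add_card_le (hΔ : Δ.IsEulerianDim D) {F G : Finset (Fin n)}
    (hG : G ∈ Δ.linkFaces F) : G.card + F.card ≤ D + 1 := by
  rw [mem_linkFaces] at hG
  rw [← card_union_of_disjoint hG.1]
  exact hΔ.1 _ hG.2

theorem IsEulerianDim.sum_range_card_linkFaces (hΔ : Δ.IsEulerianDim D) {F : Finset (Fin n)}
    (hF : F ∈ Δ.faces) :
    ∑ i ∈ range (D + 2 - F.card), (-1 : ℤ) ^ (i + 1) * #{G ∈ Δ.linkFaces F | G.card = i} =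
      (-1) ^ (D + F.card) := by
  rw [← hΔ.2.2 F hF, reducedEuler,
    ← sum_fiberwise_of_maps_to (g := card) (t := range (D + 2 - F.card))]
  · refine sum_congr rfl fun i _ => ?_
    rw [sum_congr rfl fun G hG => by rw [(mem_filter.1 hG).2], sum_const, nsmul_eq_mul, mul_comm]
  · intro G hG
    have := hΔ.card_add_card_le hG
    rw [mem_range]
    omega

theorem IsEulerianDim.card_linkVertices_eq_two (hΔ : Δ.IsEulerianDim D) {F : Finset (Fin n)}
    (hF : F ∈ Δ.faces) (hFD : F.card = D) : #(Δ.linkVertices F) = 2 := by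
  have h := hΔ.sum_range_card_linkFaces hF
  rw [hFD, show D + 2 - D = 2 by omega, Even.neg_one_pow ⟨D, rfl⟩] at h
  rw [sum_range_succ, sum_range_one, Δ.filter_linkFaces_card_eq_zero hF,
    Δ.filter_linkFaces_card_eq_one, card_singleton, card_map] at h
  norm_num at h
  omega

theorem IsEulerianDim.succ_mul_card_filter_linkFaces (hΔ : Δ.IsEulerianDim D)
    {F : Finset (Fin n)} {k : ℕ} (hk : F.card + k = D) :
    (k + 1) * #{G ∈ Δ.linkFaces F | G.card = k + 1} =
      2 * #{G ∈ Δ.linkFaces F | G.card = k} := by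
  rw [← Δ.sum_card_linkVertices, sum_const_nat fun A hA => ?_, mul_comm]
  obtain ⟨hAF, rfl⟩ := mem_filter.1 hA
  obtain ⟨hdisj, hface⟩ := mem_linkFaces.1 hAF
  exact hΔ.card_linkVertices_eq_two hface (by rw [card_union_of_disjoint hdisj]; omega)

theorem Flag.mem_faces_of_isClique (hΔ : Δ.Flag) {S : Finset (Fin n)}
    (hS : Δ.oneSkeleton.IsClique (S : Set (Fin n))) : S ∈ Δ.faces := by
  induction S using Finset.strongInduction with
  | H S ih =>
    by_contra hS'
    obtain ⟨x, y, hxy, rfl⟩ := card_eq_two.1 <| hΔ S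
      ⟨hS', fun T hT => ih T hT (hS.subset (by exact_mod_cast hT.subset))⟩
    exact hS' (hS (by simp) (by simp) hxy).2

theorem Flag.linkVertices_pair (hΔ : Δ.Flag) {v x : Fin n} (hvx : Δ.oneSkeleton.Adj v x) :
    Δ.linkVertices {x, v} =
      Δ.oneSkeleton.neighborFinset v ∩ Δ.oneSkeleton.neighborFinset x := by
  ext z
  simp only [mem_linkVertices, mem_inter, SimpleGraph.mem_neighborFinset]
  constructor
  · rintro ⟨hz, hzxv⟩
    simp only [mem_insert, mem_singleton, not_or] at hz
    refine ⟨⟨Ne.symm hz.2, Δ.down_closed _ hzxv _ ?_⟩, ⟨Ne.symm hz.1, Δ.down_closed _ hzxv _ ?_⟩⟩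
    all_goals intro w; simp only [mem_insert, mem_singleton]; tauto
  · rintro ⟨hvz, hxz⟩
    refine ⟨by simp [hvz.ne', hxz.ne'], hΔ.mem_faces_of_isClique ?_⟩
    exact (SimpleGraph.is3Clique_triple_iff.2 ⟨hxz.symm, hvz.symm, hvx.symm⟩).isClique

theorem IsEulerianDim.sum_card_inter_neighborFinset (hΔ : Δ.IsEulerianDim 3) (hflag : Δ.Flag)
    (v : Fin n) :
    ∑ x ∈ Δ.oneSkeleton.neighborFinset v,
        #(Δ.oneSkeleton.neighborFinset v ∩ Δ.oneSkeleton.neighborFinset x) + 12 =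
      6 * Δ.oneSkeleton.degree v := by
  have hv := Δ.singleton_mem v
  have heuler := hΔ.sum_range_card_linkFaces hv
  have htriangles := hΔ.succ_mul_card_filter_linkFaces (F := {v}) (k := 2) rfl
  have hedges := Δ.sum_card_linkVertices {v} 1
  rw [filter_linkFaces_card_eq_one, sum_map, ← neighborFinset_oneSkeleton] at hedges
  rw [sum_congr rfl fun x hx => by
    rw [Function.Embedding.coeFn_mk, singleton_union,
      hflag.linkVertices_pair ((Δ.oneSkeleton.mem_neighborFinset v x).1 hx)]] at hedges
  rw [card_singleton, sum_range_succ, sum_range_succ, sum_range_succ, sum_range_one,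
    filter_linkFaces_card_eq_zero _ hv, filter_linkFaces_card_eq_one, card_map,
    ← neighborFinset_oneSkeleton, SimpleGraph.card_neighborFinset_eq_degree] at heuler
  norm_num at heuler htriangles hedges
  -- With `cᵢ` the number of `i`-element faces of the link of `v`, `heuler` says
  -- `-1 + d - c₂ + c₃ = 1` and `htriangles` says `3 c₃ = 2 c₂`, so `c₂ = 3d - 6`.
  omega

end AbsComplex

/-- A flag Eulerian complex `Δ` of dimension `3` with `n` vertices satisfies
`4·f_1(Δ) < n² + 6n` (i.e. `f_1 < n²/4 + 3n/2`). -/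
theorem statement8 {n : ℕ} (Δ : AbsComplex n) (hEul : Δ.IsEulerianDim 3) (hflag : Δ.Flag) :
    4 * Δ.fNum 1 < n ^ 2 + 6 * n := by
  set G := Δ.oneSkeleton
  obtain ⟨F, -, hF⟩ := hEul.2.1
  have hn : 0 < n := (card_pos.1 (by omega : 0 < F.card)).elim fun x _ => x.pos
  have hlocal : ∀ v, G.degree v ^ 2 + ∑ x ∈ G.neighborFinset v, G.degree x + 12 ≤
      (n + 6) * G.degree v := fun v => by
    have hcommon := G.degree_sq_add_sum_degree_le v
    have hlink := hEul.sum_card_inter_neighborFinset hflag v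
    rw [Fintype.card_fin] at hcommon
    linarith
  have hsum : 2 * ∑ v, G.degree v ^ 2 + 12 * n ≤ (n + 6) * ∑ v, G.degree v := by
    have := sum_le_sum fun v (_ : v ∈ univ) => hlocal v
    rw [sum_add_distrib, sum_add_distrib, G.sum_sum_neighborFinset] at this
    simp only [smul_eq_mul, ← sq, sum_const, card_univ, Fintype.card_fin, ← mul_sum] at this
    linarith
  have hCS := sq_sum_le_card_mul_sum_sq (s := univ) (f := fun v => G.degree v)
  rw [card_univ, Fintype.card_fin] at hCS
  have hdeg := Δ.sum_degree_oneSkeleton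
  -- If `2 ∑ d ≥ n (n + 6)`, then `n (2 ∑ d² + 12 n) ≤ n (n + 6) ∑ d ≤ 2 (∑ d)² ≤ 2 n ∑ d²`.
  nlinarith
end
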